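/- arXiv:math/0506572 — 5 statements merged into one kernel-verified Lean document; each statement's English description precedes it below -/
import Mathlib

section
/- Let (W,S) be a Coxeter system and let J ⊆ S be a spherical subset such that the longest element ρ_J of ⟨J⟩ is central in ⟨J⟩. Then the normalizer of ⟨J⟩ in W equals the centralizer of ρ_J in W. -/
/-!
Let `η(w, x) ∈ {±1}` be the sign acquired by `(x, 1)` under the classical action of `W` on
`W × {±1}` in which `s i` sends `(x, ε)` to `(s i * x * s i, ε)`, except that the sign flips
when `x = s i`. It is a cocycle for the conjugation action, and for a reflection `t`,
`η(w, t) = -1` exactly when `t` is a right inversion of `w`; consequently an element is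
determined by the signs `η(w, t)` over all reflections `t`.

For `x ∈ W_J` the cocycle identity gives `η(x, t) = 1` whenever `t ∉ W_J`, while maximality of
length gives `η(ρ, t) = -1` for every reflection `t ∈ W_J`; hence `ρ` is the only element of
`W_J` with the latter property. If `w` normalizes `W_J`, then `w * ρ * w⁻¹` has this
property as well, by the cocycle identity and centrality of `ρ`. Conversely, if `w` commutes
with `ρ`, then every `w * s j * w⁻¹` with `j ∈ J` is a right inversion of `w * ρ * w⁻¹ = ρ`,
hence lies in `W_J`.
-/

namespace CoxeterSystem

open List

variable {B W : Type*} [Group W] {M : CoxeterMatrix B} (cs : CoxeterSystem M W)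

local prefix:100 "s " => cs.simple
local prefix:100 "π " => cs.wordProd
local prefix:100 "ris " => cs.rightInvSeq
local prefix:100 "lis " => cs.leftInvSeq

theorem prod_map_alternatingWord_two_mul {G : Type*} [Monoid G] (f : B → G) (i j : B) (p : ℕ) :
    ((alternatingWord i j (2 * p)).map f).prod = (f i * f j) ^ p := by
  induction p with
  | zero => simp [alternatingWord]
  | succ p ih =>
    rw [show 2 * (p + 1) = 2 * p + 1 + 1 by ring, alternatingWord_succ', alternatingWord_succ']
    simp [ih, pow_succ', mul_assoc]

theorem reverse_alternatingWord_two_mul (i j : B) (p : ℕ) :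
    (alternatingWord i j (2 * p)).reverse = alternatingWord j i (2 * p) := by
  induction p with
  | zero => simp [alternatingWord]
  | succ p ih =>
    rw [show 2 * (p + 1) = 2 * p + 1 + 1 by ring, alternatingWord_succ', alternatingWord_succ',
      alternatingWord_succ, alternatingWord_succ]
    simp [ih]

theorem leftInvSeq_alternatingWord_two_mul (i j : B) (p : ℕ) :
    lis (alternatingWord i j (2 * p)) =
      (range (2 * p)).map fun k => s i * (s j * s i) ^ k := by
  refine ext_getElem (by simp) fun k hk _ => ?_
  have hk' : k < 2 * p := by simpa using hk
  rw [getElem_leftInvSeq_alternatingWord cs i j p k hk', prod_alternatingWord_eq_mul_pow]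
  simp [Nat.add_div_of_dvd_right]

/-- Along the word `i j i j ⋯` of length `2 M i j` every reflection occurs an even number of
times, because the left inversion sequence of that word has period `M i j`. -/
theorem even_count_rightInvSeq_braid [DecidableEq W] (i j : B) (x : W) :
    Even ((ris (alternatingWord i j (2 * M i j))).count x) := by
  rw [← count_reverse, ← leftInvSeq_reverse, reverse_alternatingWord_two_mul,
    leftInvSeq_alternatingWord_two_mul, two_mul, range_add, map_append, map_map]
  have hperiod : ((fun k => s j * (s i * s j) ^ k) ∘ fun k => M i j + k) =
      fun k => s j * (s i * s j) ^ k := by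
    funext k
    simp [pow_add, simple_mul_simple_pow' cs j i, M.symmetric i j]
  rw [hperiod, count_append]
  exact ⟨_, rfl⟩

open scoped Classical

noncomputable def signedConjPerm (i : B) : Equiv.Perm (W × ℤˣ) where
  toFun p := (s i * p.1 * s i, if p.1 = s i then -p.2 else p.2)
  invFun p := (s i * p.1 * s i, if p.1 = s i then -p.2 else p.2)
  left_inv := by
    rintro ⟨x, ε⟩
    by_cases hx : x = s i <;> simp [hx, mul_assoc, mul_eq_one_iff_eq_inv]
  right_inv := by
    rintro ⟨x, ε⟩
    by_cases hx : x = s i <;> simp [hx, mul_assoc, mul_eq_one_iff_eq_inv]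

theorem prod_map_signedConjPerm_apply (ω : List B) (x : W) (ε : ℤˣ) :
    (ω.map cs.signedConjPerm).prod (x, ε) =
      (π ω * x * (π ω)⁻¹, ε * (-1) ^ (ris ω).count x) := by
  induction ω with
  | nil => simp
  | cons i ω ih =>
    rw [map_cons, prod_cons, Equiv.Perm.mul_apply, ih]
    have hconj : (π ω)⁻¹ * s i * π ω = x ↔ π ω * x * (π ω)⁻¹ = s i := by
      rw [← MulAut.conj_symm_apply, MulEquiv.symm_apply_eq, MulAut.conj_apply, eq_comm]
    simp only [signedConjPerm, Equiv.coe_fn_mk, wordProd_cons, rightInvSeq, count_cons,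
      beq_iff_eq, hconj, mul_inv_rev, inv_simple, Prod.mk.injEq]
    refine ⟨by group, ?_⟩
    split_ifs <;> simp [pow_succ]

theorem isLiftable_signedConjPerm : M.IsLiftable cs.signedConjPerm := by
  intro i j
  ext1 ⟨x, ε⟩
  have hπ : π alternatingWord i j (2 * M i j) = 1 := by
    rw [wordProd, prod_map_alternatingWord_two_mul, simple_mul_simple_pow]
  rw [← prod_map_alternatingWord_two_mul, prod_map_signedConjPerm_apply, hπ,
    (even_count_rightInvSeq_braid cs i j x).neg_one_pow]
  simp

noncomputable def signedConjRep : W →* Equiv.Perm (W × ℤˣ) :=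
  cs.lift ⟨cs.signedConjPerm, cs.isLiftable_signedConjPerm⟩

theorem signedConjRep_wordProd (ω : List B) :
    cs.signedConjRep (π ω) = (ω.map cs.signedConjPerm).prod := by
  rw [wordProd, map_list_prod, map_map]
  congr 2
  funext i
  exact cs.lift_apply_simple cs.isLiftable_signedConjPerm i

noncomputable def inversionSign (w x : W) : ℤˣ := (cs.signedConjRep w (x, 1)).2

theorem inversionSign_wordProd (ω : List B) (x : W) :
    cs.inversionSign (π ω) x = (-1) ^ (ris ω).count x := by
  simp [inversionSign, signedConjRep_wordProd, prod_map_signedConjPerm_apply]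

theorem signedConjRep_apply (w x : W) (ε : ℤˣ) :
    cs.signedConjRep w (x, ε) = (w * x * w⁻¹, ε * cs.inversionSign w x) := by
  obtain ⟨ω, rfl⟩ := cs.wordProd_surjective w
  simp [inversionSign, signedConjRep_wordProd, prod_map_signedConjPerm_apply]

theorem inversionSign_mul (u v x : W) :
    cs.inversionSign (u * v) x = cs.inversionSign u (v * x * v⁻¹) * cs.inversionSign v x := by
  rw [inversionSign, map_mul, Equiv.Perm.mul_apply, signedConjRep_apply cs v,
    signedConjRep_apply cs u, one_mul, mul_comm]

@[simp] theorem inversionSign_one (x : W) : cs.inversionSign 1 x = 1 := by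
  simp [inversionSign]

theorem inversionSign_simple (i : B) (x : W) :
    cs.inversionSign (s i) x = if x = s i then -1 else 1 := by
  simp [inversionSign, signedConjRep, lift_apply_simple, signedConjPerm]

theorem inversionSign_inv (w x : W) :
    cs.inversionSign w⁻¹ x = cs.inversionSign w (w⁻¹ * x * w) := by
  have h := cs.inversionSign_mul w w⁻¹ x
  rw [mul_inv_cancel, inversionSign_one, inv_inv] at h
  rw [eq_inv_of_mul_eq_one_right h.symm, Int.units_inv_eq_self]

theorem inversionSign_conj_of_commute {a w t : W} (h : Commute a (w⁻¹ * t * w)) :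
    cs.inversionSign (w * a * w⁻¹) t = cs.inversionSign a (w⁻¹ * t * w) := by
  rw [inversionSign_mul, inv_inv, inversionSign_mul, h.eq, mul_inv_cancel_right,
    inversionSign_inv, mul_comm, ← mul_assoc, Int.units_mul_self, one_mul]

theorem inversionSign_self {t : W} (ht : cs.IsReflection t) : cs.inversionSign t t = -1 := by
  obtain ⟨w, i, rfl⟩ := ht
  have hs : w⁻¹ * (w * s i * w⁻¹) * w = s i := by group
  rw [inversionSign_conj_of_commute cs (a := s i) (w := w) (by rw [hs]), hs,
    inversionSign_simple, if_pos rfl]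

theorem isRightInversion_of_inversionSign_eq_neg_one {w t : W}
    (h : cs.inversionSign w t = -1) : cs.IsRightInversion w t := by
  obtain ⟨ω, hω, rfl⟩ := cs.exists_isReduced w
  refine cs.isRightInversion_of_mem_rightInvSeq hω (by_contra fun hmem => ?_)
  rw [inversionSign_wordProd, count_eq_zero_of_not_mem hmem, pow_zero] at h
  exact absurd h (by decide)

theorem inversionSign_eq_neg_one_iff {w t : W} (ht : cs.IsReflection t) :
    cs.inversionSign w t = -1 ↔ cs.IsRightInversion w t := by
  refine ⟨cs.isRightInversion_of_inversionSign_eq_neg_one, fun hwt => by_contra fun h => ?_⟩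
  have hwt' : cs.inversionSign (w * t) t = -1 := by
    rw [inversionSign_mul, mul_inv_cancel_right, inversionSign_self cs ht,
      Int.units_ne_iff_eq_neg.mp h, neg_neg, one_mul]
  have hlt := (cs.isRightInversion_of_inversionSign_eq_neg_one hwt').2
  rw [mul_assoc, ht.mul_self, mul_one] at hlt
  exact lt_asymm hlt hwt.2

theorem eq_one_of_forall_inversionSign_eq_one {w : W}
    (h : ∀ t, cs.IsReflection t → cs.inversionSign w t = 1) : w = 1 := by
  by_contra hw
  obtain ⟨i, hi⟩ := cs.exists_rightDescent_of_ne_one hw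
  have hsign := (cs.inversionSign_eq_neg_one_iff (cs.isReflection_simple i)).mpr
    ((cs.isRightInversion_simple_iff_isRightDescent w i).mpr hi)
  rw [h _ (cs.isReflection_simple i)] at hsign
  exact absurd hsign (by decide)

theorem eq_of_forall_inversionSign_eq {x y : W}
    (h : ∀ t, cs.IsReflection t → cs.inversionSign x t = cs.inversionSign y t) : x = y := by
  rw [← mul_inv_eq_one]
  refine cs.eq_one_of_forall_inversionSign_eq_one fun t ht => ?_
  rw [inversionSign_mul, inv_inv, inversionSign_inv, h _ (by simpa using ht.conj y⁻¹),
    Int.units_mul_self]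

section Parabolic

variable {J : Set B}

local notation "W_J" => Subgroup.closure (cs.simple '' J)

theorem inversionSign_eq_one_of_mem_closure {x t : W} (hx : x ∈ W_J) (ht : t ∉ W_J) :
    cs.inversionSign x t = 1 := by
  induction hx using Subgroup.closure_induction generalizing t with
  | mem _ hy =>
    obtain ⟨j, hj, rfl⟩ := hy
    rw [inversionSign_simple, if_neg]
    rintro rfl
    exact ht (Subgroup.subset_closure ⟨j, hj, rfl⟩)
  | one => exact cs.inversionSign_one t
  | mul a b ha hb iha ihb =>
    rw [inversionSign_mul, ihb ht, iha, one_mul]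
    rwa [mul_mem_cancel_right (inv_mem hb), mul_mem_cancel_left hb]
  | inv a ha iha =>
    rw [inversionSign_inv, iha]
    rwa [mul_mem_cancel_right ha, mul_mem_cancel_left (inv_mem ha)]

theorem mem_closure_of_isRightInversion {x t : W} (hx : x ∈ W_J)
    (h : cs.IsRightInversion x t) : t ∈ W_J := by
  by_contra ht
  have hsign := (cs.inversionSign_eq_neg_one_iff h.1).mpr h
  rw [cs.inversionSign_eq_one_of_mem_closure hx ht] at hsign
  exact absurd hsign (by decide)

theorem eq_of_forall_inversionSign_eq_of_mem_closure {x y : W} (hx : x ∈ W_J) (hy : y ∈ W_J)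
    (h : ∀ t, cs.IsReflection t → t ∈ W_J → cs.inversionSign x t = cs.inversionSign y t) :
    x = y := by
  refine cs.eq_of_forall_inversionSign_eq fun t ht => ?_
  by_cases htJ : t ∈ W_J
  · exact h t ht htJ
  · rw [cs.inversionSign_eq_one_of_mem_closure hx htJ,
      cs.inversionSign_eq_one_of_mem_closure hy htJ]

theorem inversionSign_eq_neg_one_of_forall_length_le {ρ t : W} (hρ : ρ ∈ W_J)
    (hlong : ∀ x ∈ W_J, cs.length x ≤ cs.length ρ) (ht : cs.IsReflection t)
    (htJ : t ∈ W_J) : cs.inversionSign ρ t = -1 :=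
  (cs.inversionSign_eq_neg_one_iff ht).mpr
    ⟨ht, lt_of_le_of_ne (hlong _ (mul_mem hρ htJ)) (ht.length_mul_left_ne ρ)⟩

theorem conj_eq_of_mem_normalizer {ρ w : W} (hρ : ρ ∈ W_J)
    (hlong : ∀ x ∈ W_J, cs.length x ≤ cs.length ρ) (hcentral : ∀ x ∈ W_J, Commute ρ x)
    (hw : w ∈ Subgroup.normalizer (W_J : Set W)) : w * ρ * w⁻¹ = ρ := by
  refine cs.eq_of_forall_inversionSign_eq_of_mem_closure ((hw ρ).mp hρ) hρ fun t ht htJ => ?_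
  have hu : w⁻¹ * t * w ∈ W_J := (hw _).mpr (by group; exact htJ)
  rw [inversionSign_conj_of_commute cs (hcentral _ hu),
    cs.inversionSign_eq_neg_one_of_forall_length_le hρ hlong (by simpa using ht.conj w⁻¹) hu,
    cs.inversionSign_eq_neg_one_of_forall_length_le hρ hlong ht htJ]

theorem conj_mem_closure_of_commute {ρ w x : W} (hρ : ρ ∈ W_J)
    (hlong : ∀ x ∈ W_J, cs.length x ≤ cs.length ρ) (hcentral : ∀ x ∈ W_J, Commute ρ x)
    (hw : Commute w ρ) (hx : x ∈ W_J) : w * x * w⁻¹ ∈ W_J := by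
  suffices W_J ≤ Subgroup.comap (MulAut.conj w).toMonoidHom W_J from this hx
  rw [Subgroup.closure_le]
  rintro _ ⟨j, hj, rfl⟩
  have hsj : s j ∈ W_J := Subgroup.subset_closure ⟨j, hj, rfl⟩
  have hs : w⁻¹ * (w * s j * w⁻¹) * w = s j := by group
  have hsign : cs.inversionSign ρ (w * s j * w⁻¹) = -1 := by
    have hρw : w * ρ * w⁻¹ = ρ := by rw [hw.eq, mul_inv_cancel_right]
    rw [← hρw, inversionSign_conj_of_commute cs (by rw [hs]; exact hcentral _ hsj), hs,
      cs.inversionSign_eq_neg_one_of_forall_length_le hρ hlong (cs.isReflection_simple j) hsj]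
  exact cs.mem_closure_of_isRightInversion hρ
    ((cs.inversionSign_eq_neg_one_iff ((cs.isReflection_simple j).conj w)).mp hsign)

end Parabolic

end CoxeterSystem

theorem coxeter_normalizer_parabolic_eq_centralizer_longest_general
    {B W : Type*} [Group W] {M : CoxeterMatrix B} (cs : CoxeterSystem M W) (J : Set B) (ρ : W)
    (hmem : ρ ∈ Subgroup.closure (cs.simple '' J))
    (hlong : ∀ x ∈ Subgroup.closure (cs.simple '' J), cs.length x ≤ cs.length ρ)
    (hcentral : ∀ x ∈ Subgroup.closure (cs.simple '' J), ρ * x = x * ρ) :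
    Subgroup.normalizer ((Subgroup.closure (cs.simple '' J) : Subgroup W) : Set W) = Subgroup.centralizer {ρ} := by
  ext w
  rw [Subgroup.mem_centralizer_singleton_iff]
  constructor
  · intro hw
    rw [← mul_inv_eq_iff_eq_mul, cs.conj_eq_of_mem_normalizer hmem hlong hcentral hw]
  · intro hw
    refine Subgroup.mem_normalizer_iff.mpr fun x =>
      ⟨cs.conj_mem_closure_of_commute hmem hlong hcentral hw, fun hx => ?_⟩
    simpa [mul_assoc] using
      cs.conj_mem_closure_of_commute hmem hlong hcentral (show Commute w ρ from hw).inv_left hx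

/-- Let `(W, S)` be a Coxeter system and `J ⊆ S` a spherical subset such that the
longest element `ρ_J` of `⟨J⟩` is central in `⟨J⟩`.  Then the normalizer of `⟨J⟩` in `W`
equals the centralizer of `ρ_J` in `W`. -/
theorem coxeter_normalizer_parabolic_eq_centralizer_longest
    {B W : Type*} [Group W] {M : CoxeterMatrix B} (cs : CoxeterSystem M W) (J : Set B) (ρ : W)
    (hfin : ((Subgroup.closure (cs.simple '' J) : Subgroup W) : Set W).Finite)
    (hmem : ρ ∈ Subgroup.closure (cs.simple '' J))
    (hlong : ∀ x ∈ Subgroup.closure (cs.simple '' J), cs.length x ≤ cs.length ρ)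
    (hcentral : ∀ x ∈ Subgroup.closure (cs.simple '' J), ρ * x = x * ρ) :
    Subgroup.normalizer ((Subgroup.closure (cs.simple '' J) : Subgroup W) : Set W) = Subgroup.centralizer {ρ} :=
  coxeter_normalizer_parabolic_eq_centralizer_longest_general cs J ρ hmem hlong hcentral
end

section
/- Let n = 2(2k+1) for a natural number k ≥ 1, and let W be the dihedral group of order 2n with Coxeter generating set {s,t} of type I₂(n) (i.e. o(st) = n). Let ρ = (st)^{n/2} be the central element of W. Then {s, tst, ρ} is also a Coxeter generating set of W, of type I₂(2k+1) × A₁: o(s·tst) = 2k+1, o(sρ) = o(tst·ρ) = 2, and the three involutions s, tst, ρ generate W with these relations presenting W. -/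
/-!
Write `ρ = (st)^(2k+1)`. Both `s` and `t` conjugate `st` to its inverse and `ρ² = 1`, so `ρ`
commutes with `s` and `t`, hence is central. Since `s · tst = (st)²`, its order is `2k+1`, and
`ρ` differs from the involutions `s` and `tst` because it has even length parity while they have
odd parity; so `sρ` and `tst · ρ` have order `2`.

For the presentation, let `a, b, c` be the generators of the Coxeter group of type
`I₂(2k+1) × A₁`, `c` the central one. As `2k+1` is odd, `(ab)^(k+1)` is a square root of `ab`,
and `T = a (ab)^(k+1) c` is an involution with `T a T = b` and `(aT)^(2k+1) = c`; in particular
`(aT)^(2(2k+1)) = 1`, so `s ↦ a, t ↦ T` is a homomorphism `W → I₂(2k+1) × A₁` sending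
`s, tst, ρ` to `a, b, c`. It is left inverse to the homomorphism `a, b, c ↦ s, tst, ρ`, which is
onto because `t = s (s · tst)^(k+1) ρ`; the two groups are therefore isomorphic.
-/

/-- A subset `R` of a group `W` is a Coxeter generating set if there is a Coxeter system on `W`
whose simple reflections are exactly the elements of `R`. -/
def IsCoxeterGenSet {W : Type*} [Group W] (R : Set W) : Prop :=
  ∃ (M : CoxeterMatrix R) (cs : CoxeterSystem M W), ∀ r : R, cs.simple r = (r : W)

section Involutions

variable {G : Type*} [Group G] {x y : G}

theorem mul_swap_eq_inv_of_mul_self_eq_one (hx : x * x = 1) (hy : y * y = 1) :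
    y * x = (x * y)⁻¹ := by
  rw [mul_inv_rev, inv_eq_of_mul_eq_one_right hx, inv_eq_of_mul_eq_one_right hy]

theorem commute_of_mul_self_eq_one_of_mul_pow_two_eq_one (hx : x * x = 1) (hy : y * y = 1)
    (hxy : (x * y) ^ 2 = 1) : Commute x y := by
  rw [Commute, SemiconjBy, mul_swap_eq_inv_of_mul_self_eq_one hx hy]
  exact (inv_eq_of_mul_eq_one_right (pow_two (x * y) ▸ hxy)).symm

theorem commute_of_conj_eq_inv (hx : x * y * x⁻¹ = y⁻¹) (hy : y * y = 1) : Commute x y := by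
  rw [inv_eq_of_mul_eq_one_right hy] at hx
  exact mul_inv_eq_iff_eq_mul.mp hx

theorem conj_mul_self_eq_one (hx : x * x = 1) (hy : y * y = 1) : y * x * y * (y * x * y) = 1 := by
  simp only [mul_assoc, ← mul_assoc y y, hy, one_mul, ← mul_assoc x x, hx]

theorem orderOf_mul_eq_two (hx : x * x = 1) (hy : y * y = 1) (hxy : Commute x y)
    (hne : x ≠ y) : orderOf (x * y) = 2 := by
  refine orderOf_eq_prime ?_ fun h => hne ?_
  · rw [hxy.mul_pow, pow_two, pow_two, hx, hy, one_mul]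
  · rw [eq_inv_of_mul_eq_one_left h, inv_eq_of_mul_eq_one_right hy]

theorem exists_involution_conj_eq_of_mul_pow_eq_one {a b c : G} {k : ℕ} (ha : a * a = 1)
    (hb : b * b = 1) (hc : c * c = 1) (hca : Commute c a) (hcb : Commute c b)
    (hab : (a * b) ^ (2 * k + 1) = 1) :
    ∃ t : G, t * t = 1 ∧ t * a * t = b ∧ (a * t) ^ (2 * k + 1) = c := by
  have ha' : a⁻¹ = a := inv_eq_of_mul_eq_one_right ha
  have hb' : b⁻¹ = b := inv_eq_of_mul_eq_one_right hb
  have hPa : a * (a * b) ^ (k + 1) * a = ((a * b) ^ (k + 1))⁻¹ :=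
    calc a * (a * b) ^ (k + 1) * a = (a * (a * b) * a⁻¹) ^ (k + 1) := by rw [conj_pow, ha']
      _ = ((a * b) ^ (k + 1))⁻¹ := by
        rw [← inv_pow, mul_inv_rev, ha', hb', ← mul_assoc, ha, one_mul]
  have hPP : (a * b) ^ (k + 1) * (a * b) ^ (k + 1) = a * b := by
    rw [← pow_add, show k + 1 + (k + 1) = 2 * k + 1 + 1 by ring, pow_succ, hab, one_mul]
  have hcP : Commute c ((a * b) ^ (k + 1)) := (hca.mul_right hcb).pow_right _
  set P := (a * b) ^ (k + 1)
  have haPc : a * (a * P * c) = P * c := by rw [← mul_assoc, ← mul_assoc, ha, one_mul]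
  refine ⟨a * P * c, ?_, ?_, ?_⟩
  · rw [← pow_two, (hca.mul_right hcP).symm.mul_pow, pow_two, pow_two, hc, mul_one,
      ← mul_assoc, hPa, inv_mul_cancel]
  · rw [mul_assoc _ a, haPc, mul_assoc, mul_assoc, ← mul_assoc c, hcP.eq, mul_assoc, hc, mul_one,
      hPP, ← mul_assoc, ha, one_mul]
  · rw [haPc, hcP.symm.mul_pow, ← pow_mul, mul_comm (k + 1), pow_mul, hab, one_pow, one_mul,
      pow_succ, pow_mul, pow_two, hc, one_pow, one_mul]

end Involutions

theorem orderOf_mul_mul_mul_of_orderOf_mul_eq_two_mul {G : Type*} [Group G] {s t : G} {n : ℕ}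
    (h : orderOf (s * t) = 2 * n) : orderOf (s * (t * s * t)) = n := by
  rw [show s * (t * s * t) = (s * t) ^ 2 by simp only [pow_two, mul_assoc],
    orderOf_pow_of_dvd two_ne_zero ⟨n, h⟩, h, Nat.mul_div_cancel_left n two_pos]

namespace CoxeterMatrix

variable {B : Type*} [DecidableEq B] {c : B} {m : ℕ} {hm : m ≠ 1} {i j : B}

/-- On three generators this is the Coxeter matrix of `I₂(m) × A₁`, with `c` the `A₁` vertex. -/
def withCentralVertex (c : B) (m : ℕ) (hm : m ≠ 1) : CoxeterMatrix B where
  M := Matrix.of fun i j => if i = j then 1 else if i = c ∨ j = c then 2 else m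
  isSymm := by
    ext i j
    simp only [Matrix.transpose_apply, Matrix.of_apply, eq_comm, or_comm]
  diagonal i := by simp
  off_diagonal i j hij := by
    simp only [Matrix.of_apply, if_neg hij]
    split_ifs <;> omega

theorem withCentralVertex_apply_center (hi : i ≠ c) : withCentralVertex c m hm i c = 2 := by
  simp [withCentralVertex, hi]

theorem withCentralVertex_apply_of_ne (hij : i ≠ j) (hi : i ≠ c) (hj : j ≠ c) :
    withCentralVertex c m hm i j = m := by
  simp [withCentralVertex, hij, hi, hj]

theorem isLiftable_withCentralVertex {G : Type*} [Monoid G] {f : B → G}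
    (hinv : ∀ i, f i * f i = 1) (hc : ∀ i, Commute (f i) (f c))
    (hf : ∀ i j, i ≠ j → i ≠ c → j ≠ c → (f i * f j) ^ m = 1) :
    (withCentralVertex c m hm).IsLiftable f := by
  intro i j
  by_cases hij : i = j
  · subst hij
    rw [diagonal, pow_one, hinv]
  by_cases hi : i = c
  · subst hi
    rw [symmetric, withCentralVertex_apply_center (Ne.symm hij), (hc j).symm.mul_pow, pow_two,
      pow_two, hinv, hinv, one_mul]
  by_cases hj : j = c
  · subst hj
    rw [withCentralVertex_apply_center hi, (hc i).mul_pow, pow_two, pow_two, hinv, hinv, one_mul]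
  rw [withCentralVertex_apply_of_ne hij hi hj]
  exact hf i j hij hi hj

end CoxeterMatrix

namespace CoxeterSystem

variable {B W : Type*} [Group W] {M : CoxeterMatrix B} (cs : CoxeterSystem M W)

theorem commute_simple_of_eq_two {i j : B} (h : M i j = 2) :
    Commute (cs.simple i) (cs.simple j) :=
  commute_of_mul_self_eq_one_of_mul_pow_two_eq_one (cs.simple_mul_simple_self i)
    (cs.simple_mul_simple_self j) (h ▸ cs.simple_mul_simple_pow i j)

theorem isLiftable_of_pow_orderOf {G : Type*} [Monoid G] {f : B → G}
    (hf : ∀ i j, (f i * f j) ^ orderOf (cs.simple i * cs.simple j) = 1) : M.IsLiftable f := by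
  intro i j
  obtain ⟨q, hq⟩ := orderOf_dvd_of_pow_eq_one (cs.simple_mul_simple_pow i j)
  rw [hq, pow_mul, hf, one_pow]

theorem exists_involution_of_withCentralVertex [DecidableEq B] {c i j : B} {k : ℕ}
    {hk : 2 * k + 1 ≠ 1} (cs : CoxeterSystem (CoxeterMatrix.withCentralVertex c (2 * k + 1) hk) W)
    (hij : i ≠ j) (hi : i ≠ c) (hj : j ≠ c) :
    ∃ t : W, t * t = 1 ∧ t * cs.simple i * t = cs.simple j ∧
      (cs.simple i * t) ^ (2 * k + 1) = cs.simple c :=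
  exists_involution_conj_eq_of_mul_pow_eq_one (cs.simple_mul_simple_self i)
    (cs.simple_mul_simple_self j) (cs.simple_mul_simple_self c)
    (cs.commute_simple_of_eq_two (CoxeterMatrix.withCentralVertex_apply_center hi)).symm
    (cs.commute_simple_of_eq_two (CoxeterMatrix.withCentralVertex_apply_center hj)).symm
    (by simpa only [CoxeterMatrix.withCentralVertex_apply_of_ne hij hi hj] using
      cs.simple_mul_simple_pow i j)

end CoxeterSystem

namespace IsCoxeterGenSet

variable {W : Type*} [Group W] {R : Set W} {s t : W}

theorem of_isLiftable (M : CoxeterMatrix R) (hM : M.IsLiftable ((↑) : R → W))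
    (hR : Subgroup.closure R = ⊤) (ψ : W →* M.Group) (hψ : ∀ r : R, ψ r = M.simple r) :
    IsCoxeterGenSet R := by
  let φ : M.Group →* W := M.toCoxeterSystem.lift ⟨_, hM⟩
  have hφ (r : R) : φ (M.simple r) = r := M.toCoxeterSystem.lift_apply_simple hM r
  have hψφ : ψ.comp φ = MonoidHom.id _ :=
    M.toCoxeterSystem.ext_simple fun r => by
      simp only [MonoidHom.comp_apply, MonoidHom.id_apply, M.toCoxeterSystem_simple, hφ, hψ]
  have hinj : Function.Injective φ := Function.LeftInverse.injective (DFunLike.congr_fun hψφ)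
  have hsurj : Function.Surjective φ := by
    rw [← MonoidHom.range_eq_top, eq_top_iff, ← hR, Subgroup.closure_le]
    exact fun r hr => ⟨_, hφ ⟨r, hr⟩⟩
  exact ⟨M, ⟨(MulEquiv.ofBijective φ ⟨hinj, hsurj⟩).symm⟩, hφ⟩

theorem mul_self_eq_one (h : IsCoxeterGenSet R) {r : W} (hr : r ∈ R) : r * r = 1 := by
  obtain ⟨M, cs, hcs⟩ := h
  simpa only [hcs] using cs.simple_mul_simple_self ⟨r, hr⟩

theorem closure_eq_top (h : IsCoxeterGenSet R) : Subgroup.closure R = ⊤ := by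
  obtain ⟨M, cs, hcs⟩ := h
  rw [← cs.subgroup_closure_range_simple, funext hcs, Subtype.range_coe]

theorem exists_parity (h : IsCoxeterGenSet R) :
    ∃ ε : W →* Multiplicative (ZMod 2), ∀ r ∈ R, ε r = Multiplicative.ofAdd 1 := by
  obtain ⟨M, cs, hcs⟩ := h
  refine ⟨cs.lengthParity, fun r hr => ?_⟩
  rw [← cs.lengthParity_simple ⟨r, hr⟩, hcs]

theorem exists_monoidHom_of_pair (h : IsCoxeterGenSet {s, t}) (hst : s ≠ t)
    {G : Type*} [Group G] {a b : G} (ha : a * a = 1) (hb : b * b = 1)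
    (hab : (a * b) ^ orderOf (s * t) = 1) : ∃ ψ : W →* G, ψ s = a ∧ ψ t = b := by
  classical
  have hs := h.mul_self_eq_one (Set.mem_insert s {t})
  have ht := h.mul_self_eq_one (Set.mem_insert_of_mem s rfl)
  obtain ⟨M, cs, hcs⟩ := h
  let f : ({s, t} : Set W) → G := fun i => if (i : W) = s then a else b
  have hf : M.IsLiftable f := by
    refine cs.isLiftable_of_pow_orderOf fun ⟨i, hi⟩ ⟨j, hj⟩ => ?_
    simp only [hcs]
    rcases hi with hi | (hi : i = t) <;> rcases hj with hj | (hj : j = t) <;>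
      simp only [f, hi, hj, if_pos, if_neg (Ne.symm hst), ha, hb, hab, one_pow]
    rw [mul_swap_eq_inv_of_mul_self_eq_one ha hb, mul_swap_eq_inv_of_mul_self_eq_one hs ht,
      orderOf_inv, inv_pow, hab, inv_one]
  refine ⟨cs.lift ⟨f, hf⟩, ?_, ?_⟩
  · simpa [f, hcs] using cs.lift_apply_simple hf ⟨s, by simp⟩
  · simpa [f, hcs, Ne.symm hst] using cs.lift_apply_simple hf ⟨t, by simp⟩

theorem commute_mul_pow (h : IsCoxeterGenSet {s, t}) {n : ℕ} (hn : (s * t) ^ (2 * n) = 1)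
    (w : W) : Commute ((s * t) ^ n) w := by
  have hs := h.mul_self_eq_one (Set.mem_insert s {t})
  have ht := h.mul_self_eq_one (Set.mem_insert_of_mem s rfl)
  have hcomm (x : W) (hx : x * (s * t) * x⁻¹ = (s * t)⁻¹) : x * (s * t) ^ n = (s * t) ^ n * x :=
    commute_of_conj_eq_inv (by rw [← conj_pow, hx, inv_pow]) (by rw [← pow_add, ← two_mul, hn])
  have hcen : (s * t) ^ n ∈ Subgroup.centralizer (Subgroup.closure {s, t} : Set W) := by
    rw [Subgroup.centralizer_closure, Subgroup.mem_centralizer_iff]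
    simp only [Set.mem_insert_iff, Set.mem_singleton_iff, forall_eq_or_imp, forall_eq]
    refine ⟨hcomm s ?_, hcomm t ?_⟩
    · rw [inv_eq_of_mul_eq_one_right hs, ← mul_assoc, hs, one_mul,
        mul_swap_eq_inv_of_mul_self_eq_one hs ht]
    · rw [mul_assoc, mul_assoc, mul_inv_cancel, mul_one, mul_swap_eq_inv_of_mul_self_eq_one hs ht]
  rw [h.closure_eq_top] at hcen
  exact (Subgroup.mem_centralizer_iff.mp hcen w (Subgroup.mem_top w)).symm

theorem ne_mul_pow (h : IsCoxeterGenSet {s, t}) (n : ℕ) :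
    s ≠ (s * t) ^ n ∧ t * s * t ≠ (s * t) ^ n := by
  obtain ⟨ε, hε⟩ := h.exists_parity
  have hs := hε s (Set.mem_insert s {t})
  have ht := hε t (Set.mem_insert_of_mem s rfl)
  constructor <;> intro heq <;> have := congrArg ε heq <;>
    simp [hs, ht, ← ofAdd_add, CharTwo.add_self_eq_zero] at this

theorem closure_triple_eq_top {k : ℕ} (h : IsCoxeterGenSet {s, t})
    (hpow : (s * t) ^ (2 * (2 * k + 1)) = 1) :
    Subgroup.closure {s, t * s * t, (s * t) ^ (2 * k + 1)} = ⊤ := by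
  have hs := h.mul_self_eq_one (Set.mem_insert s {t})
  have ht_eq : s * (s * (t * s * t)) ^ (k + 1) * (s * t) ^ (2 * k + 1) = t := by
    rw [show s * (t * s * t) = (s * t) ^ 2 by simp only [pow_two, mul_assoc], ← pow_mul,
      mul_assoc, ← pow_add, show 2 * (k + 1) + (2 * k + 1) = 2 * (2 * k + 1) + 1 by ring,
      pow_succ, hpow, one_mul, ← mul_assoc, hs, one_mul]
  set S := Subgroup.closure {s, t * s * t, (s * t) ^ (2 * k + 1)}
  have hsS : s ∈ S := Subgroup.subset_closure (by simp)
  have htstS : t * s * t ∈ S := Subgroup.subset_closure (by simp)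
  have hρS : (s * t) ^ (2 * k + 1) ∈ S := Subgroup.subset_closure (by simp)
  rw [eq_top_iff, ← h.closure_eq_top, Subgroup.closure_le, Set.insert_subset_iff,
    Set.singleton_subset_iff, ← ht_eq]
  exact ⟨hsS, mul_mem (mul_mem hsS (pow_mem (mul_mem hsS htstS) _)) hρS⟩

theorem triple_of_dihedral {k : ℕ} (h : IsCoxeterGenSet {s, t}) (hk : 1 ≤ k)
    (hord : orderOf (s * t) = 2 * (2 * k + 1)) :
    IsCoxeterGenSet {s, t * s * t, (s * t) ^ (2 * k + 1)} := by
  classical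
  set R : Set W := {s, t * s * t, (s * t) ^ (2 * k + 1)}
  have hs := h.mul_self_eq_one (Set.mem_insert s {t})
  have ht := h.mul_self_eq_one (Set.mem_insert_of_mem s rfl)
  have hpow : (s * t) ^ (2 * (2 * k + 1)) = 1 := hord ▸ pow_orderOf_eq_one _
  have hord' := orderOf_mul_mul_mul_of_orderOf_mul_eq_two_mul hord
  have hsb : (s * (t * s * t)) ^ (2 * k + 1) = 1 := hord' ▸ pow_orderOf_eq_one _
  have hst : s ≠ t := by rintro rfl; rw [hs, orderOf_one] at hord; omega
  have hstst : s ≠ t * s * t := by rintro heq; rw [← heq, hs, orderOf_one] at hord'; omega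
  obtain ⟨hsρ, htstρ⟩ := h.ne_mul_pow (2 * k + 1)
  have hR (r : R) : (r : W) * r = 1 := by
    obtain ⟨r, rfl | rfl | rfl⟩ := r
    exacts [hs, conj_mul_self_eq_one hs ht, by rw [← pow_add, ← two_mul, hpow]]
  let a : R := ⟨s, by simp [R]⟩
  let b : R := ⟨t * s * t, by simp [R]⟩
  let c : R := ⟨(s * t) ^ (2 * k + 1), by simp [R]⟩
  let M := CoxeterMatrix.withCentralVertex c (2 * k + 1) (by omega)
  have hM : M.IsLiftable ((↑) : R → W) := by
    refine CoxeterMatrix.isLiftable_withCentralVertex hR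
      (fun r => (h.commute_mul_pow hpow r).symm) ?_
    rintro ⟨i, rfl | rfl | rfl⟩ ⟨j, rfl | rfl | rfl⟩ hij hic hjc <;>
      first | exact absurd rfl hij | exact absurd rfl hic | exact absurd rfl hjc | skip
    · exact hsb
    · rw [mul_swap_eq_inv_of_mul_self_eq_one hs (hR b), inv_pow, hsb, inv_one]
  obtain ⟨T, hT, hTa, haT⟩ := M.toCoxeterSystem.exists_involution_of_withCentralVertex
    (i := a) (j := b) (fun e => hstst (congrArg Subtype.val e))
    (fun e => hsρ (congrArg Subtype.val e)) (fun e => htstρ (congrArg Subtype.val e))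
  obtain ⟨ψ, hψs, hψt⟩ := h.exists_monoidHom_of_pair hst
    (M.toCoxeterSystem.simple_mul_simple_self a) hT
    (by rw [hord, pow_mul', haT, pow_two, M.toCoxeterSystem.simple_mul_simple_self])
  refine of_isLiftable M hM (h.closure_triple_eq_top hpow) ψ ?_
  rintro ⟨r, rfl | rfl | rfl⟩
  · exact hψs
  · simp only [map_mul, hψs, hψt, hTa]
    rfl
  · simp only [map_pow, map_mul, hψs, hψt, haT]
    rfl

end IsCoxeterGenSet

theorem dihedral_pseudo_transposition_gen_set_general
    {W : Type*} [Group W] (k : ℕ) (hk : 1 ≤ k) (s t : W)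
    (hgen : IsCoxeterGenSet {s, t})
    (hord : orderOf (s * t) = 2 * (2 * k + 1)) :
    (∀ w : W, (s * t) ^ (2 * k + 1) * w = w * (s * t) ^ (2 * k + 1)) ∧
    orderOf (s * (t * s * t)) = 2 * k + 1 ∧
    orderOf (s * (s * t) ^ (2 * k + 1)) = 2 ∧
    orderOf ((t * s * t) * (s * t) ^ (2 * k + 1)) = 2 ∧
    IsCoxeterGenSet {s, t * s * t, (s * t) ^ (2 * k + 1)} := by
  have hs := hgen.mul_self_eq_one (Set.mem_insert s {t})
  have ht := hgen.mul_self_eq_one (Set.mem_insert_of_mem s rfl)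
  have hpow : (s * t) ^ (2 * (2 * k + 1)) = 1 := hord ▸ pow_orderOf_eq_one _
  have hρ : (s * t) ^ (2 * k + 1) * (s * t) ^ (2 * k + 1) = 1 := by
    rw [← pow_add, ← two_mul, hpow]
  have hcen := hgen.commute_mul_pow hpow
  obtain ⟨hsρ, htstρ⟩ := hgen.ne_mul_pow (2 * k + 1)
  exact ⟨fun w => (hcen w).eq, orderOf_mul_mul_mul_of_orderOf_mul_eq_two_mul hord,
    orderOf_mul_eq_two hs hρ (hcen s).symm hsρ,
    orderOf_mul_eq_two (conj_mul_self_eq_one hs ht) hρ (hcen _).symm htstρ,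
    hgen.triple_of_dihedral hk hord⟩

/-- Let `n = 2(2k+1)`, `k ≥ 1`, and let `W` be the dihedral group of order `2n`
with Coxeter generating set `{s, t}` of type `I₂(n)` (so `o(st) = n`).  Let
`ρ = (st)^(n/2) = (st)^(2k+1)` be the central element of `W`.  Then `{s, tst, ρ}` is also a
Coxeter generating set of `W`, of type `I₂(2k+1) × A₁`:
`o(s · tst) = 2k+1`, `o(sρ) = o(tst · ρ) = 2`. -/
theorem dihedral_pseudo_transposition_gen_set
    {W : Type*} [Group W] (k : ℕ) (hk : 1 ≤ k) (s t : W) (hne : s ≠ t)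
    (hgen : IsCoxeterGenSet {s, t})
    (hord : orderOf (s * t) = 2 * (2 * k + 1)) :
    (∀ w : W, (s * t) ^ (2 * k + 1) * w = w * (s * t) ^ (2 * k + 1)) ∧
    orderOf (s * (t * s * t)) = 2 * k + 1 ∧
    orderOf (s * (s * t) ^ (2 * k + 1)) = 2 ∧
    orderOf ((t * s * t) * (s * t) ^ (2 * k + 1)) = 2 ∧
    IsCoxeterGenSet {s, t * s * t, (s * t) ^ (2 * k + 1)} :=
  dihedral_pseudo_transposition_gen_set_general k hk s t hgen hord
end

section
/- Let (W,S) be a Coxeter system, (J,K) an S-admissible pair such that the longest element ρ_J is central in ⟨J⟩, and let S' = T_{(J,K)}(S) be the corresponding twist. Then the Coxeter matrices M(S) and M(S') are isomorphic (via the bijection S → S' fixing J ∪ J^⊥ ∪ K and sending l ↦ ρ_J l ρ_J for l ∈ L). -/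
/-!
The twist map `f` conjugates the simple reflections indexed by `L` by `ρ` and fixes the others.
Since `ρ ∈ ⟨J⟩` is central there and commutes with `⟨J^⊥⟩`, while `m(k, l) = ∞` for `k ∈ K`,
`l ∈ L`, every Coxeter relation survives this partial conjugation, by `ρ` as well as by `ρ⁻¹`, so
both lift to endomorphisms `α`, `β` of `W`. As `β` fixes `ρ`, it sends `f i` back to `s i`.
Hence `s i * s j` and `f i * f j` are images of each other and have the same order, and `f` is
injective because `s` is; the latter is seen in Tits' geometric representation.
-/

open Complex in
theorem dihedral_step_identity (t x y p q : ℂ) :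
    -x + 2 * cos t * (-y + 2 * cos t * x - 2 * q) - 2 * p
        + (-cos t + sin t * I) * (-y + 2 * cos t * x - 2 * q) =
      exp (2 * t * I) * (x + (-cos t + sin t * I) * y) - 2 * (p + (cos t + sin t * I) * q) := by
  rw [exp_mul_I, Complex.cos_two_mul, Complex.sin_two_mul]
  linear_combination 2 * cos t * y * Complex.sin_sq_add_cos_sq t - 2 * sin t ^ 2 * cos t * y * I_sq

open Complex in
theorem isPrimitiveRoot_exp_two_mul_pi_div {m : ℕ} (hm : m ≠ 0) :
    IsPrimitiveRoot (exp (2 * ((Real.pi / m : ℝ) : ℂ) * I)) m := by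
  convert isPrimitiveRoot_exp m hm using 2
  push_cast
  ring

open Complex in
theorem eq_zero_of_ofReal_add_mul_eq_zero {θ x y : ℝ} (hθ : Real.sin θ ≠ 0)
    (h : (x : ℂ) + (-cos θ + sin θ * I) * y = 0) : x = 0 ∧ y = 0 := by
  have hy : y = 0 := by
    simpa [hθ, ← ofReal_cos, ← ofReal_sin] using congrArg im h
  subst hy
  simpa using h

namespace CoxeterMatrix

variable {B : Type*} (M : CoxeterMatrix B)

/-- `M a b = 0` encodes `m = ∞`, for which the junk value `π / 0 = 0` gives the right entry `-1`. -/
noncomputable def cosForm (a b : B) : ℝ := -Real.cos (Real.pi / M a b)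

noncomputable def cosFunctional (a : B) : (B →₀ ℝ) →ₗ[ℝ] ℝ :=
  Finsupp.linearCombination ℝ (M.cosForm · a)

noncomputable def geomReflection (a : B) : Module.End ℝ (B →₀ ℝ) :=
  LinearMap.id - (2 : ℝ) • (M.cosFunctional a).smulRight (Finsupp.single a 1)

theorem cosForm_comm (a b : B) : M.cosForm a b = M.cosForm b a := by
  rw [cosForm, cosForm, M.symmetric]

@[simp]
theorem cosForm_self (a : B) : M.cosForm a a = 1 := by
  simp [cosForm]

@[simp]
theorem cosFunctional_single (a b : B) :
    M.cosFunctional a (Finsupp.single b 1) = M.cosForm b a := by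
  simp [cosFunctional]

theorem geomReflection_apply (a : B) (v : B →₀ ℝ) :
    M.geomReflection a v = v - (2 * M.cosFunctional a v) • Finsupp.single a 1 := by
  simp [geomReflection]

theorem geomReflection_mul_self (a : B) : M.geomReflection a * M.geomReflection a = 1 := by
  refine LinearMap.ext fun v => ?_
  have h : M.cosFunctional a (M.geomReflection a v) = -M.cosFunctional a v := by
    rw [geomReflection_apply]
    simp only [map_sub, map_smul, cosFunctional_single, cosForm_self, smul_eq_mul]
    ring
  rw [Module.End.mul_apply, geomReflection_apply _ _ (M.geomReflection a v), h,
    geomReflection_apply]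
  simp

theorem geomReflection_mul_geomReflection_apply (a b : B) (v : B →₀ ℝ) (x y : ℝ) :
    (M.geomReflection a * M.geomReflection b)
        (v + x • Finsupp.single a 1 + y • Finsupp.single b 1) =
      v + (-x - 2 * M.cosForm a b * (-y - 2 * M.cosForm a b * x - 2 * M.cosFunctional b v)
          - 2 * M.cosFunctional a v) • Finsupp.single a 1
        + (-y - 2 * M.cosForm a b * x - 2 * M.cosFunctional b v) • Finsupp.single b 1 := by
  rw [Module.End.mul_apply, geomReflection_apply, geomReflection_apply]
  simp only [map_add, map_sub, map_smul, cosFunctional_single, cosForm_self, smul_eq_mul,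
    M.cosForm_comm b a]
  module

theorem geomReflection_mul_pow (a b : B) (hab : a ≠ b) (h0 : M a b ≠ 0) :
    (M.geomReflection a * M.geomReflection b) ^ M a b = 1 := by
  have hm : 2 ≤ M a b := by have := M.off_diagonal a b hab; omega
  set θ : ℝ := Real.pi / M a b with hθ
  have hsin : Real.sin θ ≠ 0 := by
    refine (Real.sin_pos_of_pos_of_lt_pi (by positivity) ?_).ne'
    exact div_lt_self Real.pi_pos (by exact_mod_cast hm)
  have hμ := isPrimitiveRoot_exp_two_mul_pi_div (m := M a b) (by omega)
  rw [← hθ] at hμ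
  set μ := Complex.exp (2 * θ * Complex.I)
  set ζ : ℂ := -Complex.cos θ + Complex.sin θ * Complex.I
  refine LinearMap.ext fun v => ?_
  set δ : ℂ := -2 * (M.cosFunctional a v
    + (Complex.cos θ + Complex.sin θ * Complex.I) * M.cosFunctional b v)
  -- In the coordinate `z = x + ζ y`, `σ_a σ_b` acts on `v + x e_a + y e_b` as `z ↦ μ z + δ`.
  have orbit (n : ℕ) : ∃ x y : ℝ,
      ((M.geomReflection a * M.geomReflection b) ^ n) v
          = v + x • Finsupp.single a 1 + y • Finsupp.single b 1 ∧
        ((x : ℂ) + ζ * y) * (μ - 1) = δ * (μ ^ n - 1) := by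
    induction n with
    | zero => exact ⟨0, 0, by simp, by simp⟩
    | succ n ih =>
      obtain ⟨x, y, hv, hz⟩ := ih
      refine ⟨_, _, by rw [pow_succ', Module.End.mul_apply, hv,
        geomReflection_mul_geomReflection_apply], ?_⟩
      have hκ : M.cosForm a b = -Real.cos θ := rfl
      have step := dihedral_step_identity θ x y (M.cosFunctional a v) (M.cosFunctional b v)
      rw [hκ]
      push_cast
      linear_combination (μ - 1) * step + μ * hz
  obtain ⟨x, y, hv, hz⟩ := orbit (M a b)
  rw [hμ.pow_eq_one, sub_self, mul_zero] at hz
  obtain ⟨rfl, rfl⟩ := eq_zero_of_ofReal_add_mul_eq_zero hsin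
    ((mul_eq_zero.1 hz).resolve_right (sub_ne_zero.2 (hμ.ne_one (by omega))))
  simpa using hv

theorem isLiftable_geomReflection : M.IsLiftable M.geomReflection := by
  intro a b
  rcases eq_or_ne a b with rfl | hab
  · simpa [M.diagonal] using M.geomReflection_mul_self a
  · rcases eq_or_ne (M a b) 0 with h0 | h0
    · simp [h0]
    · exact M.geomReflection_mul_pow a b hab h0

end CoxeterMatrix

namespace CoxeterSystem

variable {B W : Type*} [Group W] {M : CoxeterMatrix B} (cs : CoxeterSystem M W)

theorem simple_injective : Function.Injective cs.simple := by
  intro i j hij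
  by_contra hne
  have h := congrArg
    (fun w => cs.lift ⟨_, M.isLiftable_geomReflection⟩ w (Finsupp.single i 1) i) hij
  simp [M.geomReflection_apply, Ne.symm hne] at h

theorem commute_simple_of_mem_closure {j : B} {J : Set B} (h : ∀ j' ∈ J, M j j' = 2) {x : W}
    (hx : x ∈ Subgroup.closure (cs.simple '' J)) : Commute (cs.simple j) x := by
  have hle : Subgroup.closure (cs.simple '' J) ≤ Subgroup.centralizer {cs.simple j} := by
    refine (Subgroup.closure_le _).2 ?_
    rintro _ ⟨j', hj', rfl⟩
    exact Subgroup.mem_centralizer_singleton_iff.2 (cs.commute_simple_of_eq_two (h j' hj')).eq.symm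
  exact (Subgroup.mem_centralizer_singleton_iff.1 (hle hx)).symm

theorem coxeterMatrix_eq_zero_of_orderOf_eq_zero {i j : B}
    (h : orderOf (cs.simple i * cs.simple j) = 0) : M i j = 0 :=
  Nat.eq_zero_of_zero_dvd (h ▸ orderOf_dvd_of_pow_eq_one (cs.simple_mul_simple_pow i j))

noncomputable def partialConj (L : Set B) (σ : W) (i : B) : W := by
  classical exact if i ∈ L then σ * cs.simple i * σ⁻¹ else cs.simple i

variable {cs} {L : Set B} {σ : W}

theorem partialConj_of_mem {i : B} (hi : i ∈ L) :
    cs.partialConj L σ i = σ * cs.simple i * σ⁻¹ := by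
  simp [partialConj, hi]

theorem partialConj_of_notMem {i : B} (hi : i ∉ L) : cs.partialConj L σ i = cs.simple i := by
  simp [partialConj, hi]

theorem partialConj_eq_conj_of_commute {i : B} (h : i ∈ L ∨ Commute σ (cs.simple i)) :
    cs.partialConj L σ i = σ * cs.simple i * σ⁻¹ := by
  by_cases hi : i ∈ L
  · exact partialConj_of_mem hi
  · rw [partialConj_of_notMem hi, (h.resolve_left hi).mul_inv_cancel]

theorem isLiftable_partialConj (hL : ∀ i ∈ L, ∀ j ∉ L, Commute σ (cs.simple j) ∨ M i j = 0) :
    M.IsLiftable (cs.partialConj L σ) := by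
  intro i j
  have conj_case (hi : i ∈ L ∨ Commute σ (cs.simple i)) (hj : j ∈ L ∨ Commute σ (cs.simple j)) :
      (cs.partialConj L σ i * cs.partialConj L σ j) ^ M i j = 1 := by
    rw [partialConj_eq_conj_of_commute hi, partialConj_eq_conj_of_commute hj, conj_mul, conj_pow,
      cs.simple_mul_simple_pow, mul_one, mul_inv_cancel]
  by_cases hi : i ∈ L <;> by_cases hj : j ∈ L
  · exact conj_case (.inl hi) (.inl hj)
  · rcases hL i hi j hj with hc | h0
    · exact conj_case (.inl hi) (.inr hc)
    · rw [h0, pow_zero]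
  · rcases hL j hj i hi with hc | h0
    · exact conj_case (.inr hc) (.inl hj)
    · rw [M.symmetric, h0, pow_zero]
  · rw [partialConj_of_notMem hi, partialConj_of_notMem hj, cs.simple_mul_simple_pow]

theorem isLiftable_partialConj_inv
    (hL : ∀ i ∈ L, ∀ j ∉ L, Commute σ (cs.simple j) ∨ M i j = 0) :
    M.IsLiftable (cs.partialConj L σ⁻¹) :=
  isLiftable_partialConj fun i hi j hj => (hL i hi j hj).imp_left Commute.inv_left

theorem lift_partialConj_inv_apply_partialConj (hσ : σ ∈ Subgroup.closure (cs.simple '' Lᶜ))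
    (hL : ∀ i ∈ L, ∀ j ∉ L, Commute σ (cs.simple j) ∨ M i j = 0) (i : B) :
    cs.lift ⟨_, isLiftable_partialConj_inv hL⟩ (cs.partialConj L σ i) = cs.simple i := by
  set β := cs.lift ⟨_, isLiftable_partialConj_inv hL⟩
  have hβσ : β σ = σ := by
    refine MonoidHom.eqOn_closure (g := MonoidHom.id W) ?_ hσ
    rintro _ ⟨j, hj, rfl⟩
    simp [β, partialConj_of_notMem hj]
  by_cases hi : i ∈ L
  · simp only [β, partialConj_of_mem hi, map_mul, map_inv, hβσ, lift_apply_simple, inv_inv]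
    group
  · simp [β, partialConj_of_notMem hi]

theorem injective_partialConj (hσ : σ ∈ Subgroup.closure (cs.simple '' Lᶜ))
    (hL : ∀ i ∈ L, ∀ j ∉ L, Commute σ (cs.simple j) ∨ M i j = 0) :
    Function.Injective (cs.partialConj L σ) :=
  Function.Injective.of_comp (f := cs.lift ⟨_, isLiftable_partialConj_inv hL⟩) <| by
    simpa only [Function.comp_def, lift_partialConj_inv_apply_partialConj hσ hL]
      using cs.simple_injective

theorem orderOf_partialConj_mul_partialConj (hσ : σ ∈ Subgroup.closure (cs.simple '' Lᶜ))
    (hL : ∀ i ∈ L, ∀ j ∉ L, Commute σ (cs.simple j) ∨ M i j = 0) (i j : B) :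
    orderOf (cs.partialConj L σ i * cs.partialConj L σ j)
      = orderOf (cs.simple i * cs.simple j) := by
  apply Nat.dvd_antisymm
  · simpa using
      orderOf_map_dvd (cs.lift ⟨_, isLiftable_partialConj hL⟩) (cs.simple i * cs.simple j)
  · simpa [lift_partialConj_inv_apply_partialConj hσ hL] using
      orderOf_map_dvd (cs.lift ⟨_, isLiftable_partialConj_inv hL⟩)
        (cs.partialConj L σ i * cs.partialConj L σ j)

end CoxeterSystem

open CoxeterSystem in
theorem coxeter_twist_by_central_longest_preserves_type_general
    {B W : Type*} [Group W] {M : CoxeterMatrix B} (cs : CoxeterSystem M W)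
    (J K : Set B) (ρ : W)
    (Jperp : Set B) (hJperp : Jperp = {k : B | ∀ j ∈ J, M k j = 2})
    (L : Set B) (hL : L = {l : B | l ∉ J ∪ Jperp ∪ K})
    (hinf : ∀ k ∈ K, ∀ l ∈ L, orderOf (cs.simple k * cs.simple l) = 0)
    (hmem : ρ ∈ Subgroup.closure (cs.simple '' J))
    -- `ρ` is central in `⟨J⟩`:
    (hcentral : ∀ x ∈ Subgroup.closure (cs.simple '' J), ρ * x = x * ρ)
    -- the bijection `S → S'`:
    (f : B → W) (hf : (∀ i ∈ L, f i = ρ * cs.simple i * ρ⁻¹) ∧ ∀ i ∉ L, f i = cs.simple i) :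
    Function.Injective f ∧
    ∀ i j : B, orderOf (f i * f j) = orderOf (cs.simple i * cs.simple j) := by
  have hLc (j : B) : j ∉ L ↔ j ∈ J ∪ Jperp ∪ K := by rw [hL]; exact not_not
  have hf_eq : f = cs.partialConj L ρ := funext fun i => by
    by_cases hi : i ∈ L
    · rw [hf.1 i hi, partialConj_of_mem hi]
    · rw [hf.2 i hi, partialConj_of_notMem hi]
  have hρ : ρ ∈ Subgroup.closure (cs.simple '' Lᶜ) :=
    Subgroup.closure_mono (Set.image_mono fun j hj => (hLc j).2 (.inl (.inl hj))) hmem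
  have hcomm : ∀ i ∈ L, ∀ j ∉ L, Commute ρ (cs.simple j) ∨ M i j = 0 := by
    intro i hi j hj
    rcases (hLc j).1 hj with (hjJ | hjJperp) | hjK
    · exact .inl (hcentral _ (Subgroup.subset_closure ⟨j, hjJ, rfl⟩))
    · rw [hJperp] at hjJperp
      exact .inl (cs.commute_simple_of_mem_closure hjJperp hmem).symm
    · rw [M.symmetric]
      exact .inr (cs.coxeterMatrix_eq_zero_of_orderOf_eq_zero (hinf j hjK i hi))
  subst hf_eq
  exact ⟨injective_partialConj hρ hcomm, orderOf_partialConj_mul_partialConj hρ hcomm⟩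

/-- Let `(W, S)` be a Coxeter system and `(J, K)` an `S`-admissible pair such
that the longest element `ρ_J` of `⟨J⟩` is central in `⟨J⟩`.  Then the Coxeter matrices
`M(S)` and `M(S')` of `S` and of the twist `S' = T_{(J,K)}(S)` are isomorphic, via the
bijection fixing `J ∪ J^⊥ ∪ K` and sending `l ↦ ρ_J l ρ_J` for `l ∈ L`. -/
theorem coxeter_twist_by_central_longest_preserves_type
    {B W : Type*} [Group W] {M : CoxeterMatrix B} (cs : CoxeterSystem M W)
    (J K : Set B) (ρ : W)
    (Jperp : Set B) (hJperp : Jperp = {k : B | ∀ j ∈ J, M k j = 2})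
    (L : Set B) (hL : L = {l : B | l ∉ J ∪ Jperp ∪ K})
    (hfin : ((Subgroup.closure (cs.simple '' J) : Subgroup W) : Set W).Finite)
    (hK : K ∩ (J ∪ Jperp) = ∅)
    (hinf : ∀ k ∈ K, ∀ l ∈ L, orderOf (cs.simple k * cs.simple l) = 0)
    (hmem : ρ ∈ Subgroup.closure (cs.simple '' J))
    (hlong : ∀ x ∈ Subgroup.closure (cs.simple '' J), cs.length x ≤ cs.length ρ)
    -- `ρ` is central in `⟨J⟩`:
    (hcentral : ∀ x ∈ Subgroup.closure (cs.simple '' J), ρ * x = x * ρ)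
    -- the bijection `S → S'`:
    (f : B → W) (hf : (∀ i ∈ L, f i = ρ * cs.simple i * ρ⁻¹) ∧ ∀ i ∉ L, f i = cs.simple i) :
    Function.Injective f ∧
    ∀ i j : B, orderOf (f i * f j) = orderOf (cs.simple i * cs.simple j) :=
  coxeter_twist_by_central_longest_preserves_type_general cs J K ρ Jperp hJperp L hL hinf hmem
    hcentral f hf
end

section
/- Let W be the Coxeter group with generating set S = {s₁,s₂,s₃,s₄} subject to o(s₁s₂) = o(s₂s₃) = o(s₃s₄) = 3 and o(s₁s₃) = o(s₁s₄) = o(s₂s₄) = ∞. Set s₁' = s₁, s₂' = s₂, s₃' = s₃, s₄' = s₂s₃s₂s₄s₂s₃s₂. Then S' = {s₁',s₂',s₃',s₄'} is a Coxeter generating set of W with o(s₁'s₂') = o(s₂'s₃') = o(s₂'s₄') = 3 and o(s₁'s₃') = o(s₁'s₄') = o(s₃'s₄') = ∞; in particular M(S') is not isomorphic to M(S) (the diagram of M(S) is a path while the diagram of M(S') is a star), so W is a non-rigid Coxeter group. -/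
/-- The Coxeter matrix over `{s₁, s₂, s₃, s₄}` with `o(s₁s₂) = o(s₂s₃) = o(s₃s₄) = 3` and
`o(s₁s₃) = o(s₁s₄) = o(s₂s₄) = ∞` (the entry `0` encodes `∞`). -/
def pathMatrix : CoxeterMatrix (Fin 4) where
  M := !![1, 3, 0, 0; 3, 1, 3, 0; 0, 3, 1, 3; 0, 0, 3, 1]
  isSymm := by ext i j; fin_cases i <;> fin_cases j <;> rfl
  diagonal := by intro i; fin_cases i <;> rfl
  off_diagonal := by intro i j h; fin_cases i <;> fin_cases j <;> first | (exact absurd rfl h) | decide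

namespace TwistAux

def starMatrix : CoxeterMatrix (Fin 4) where
  M := !![1, 3, 0, 0; 3, 1, 3, 3; 0, 3, 1, 0; 0, 3, 0, 1]
  isSymm := by ext i j; fin_cases i <;> fin_cases j <;> rfl
  diagonal := by intro i; fin_cases i <;> rfl
  off_diagonal := by intro i j h; fin_cases i <;> fin_cases j <;> first | (exact absurd rfl h) | decide

def A0 : Matrix (Fin 4) (Fin 4) ℤ := !![-1,1,2,2; 0,1,0,0; 0,0,1,0; 0,0,0,1]
def A1 : Matrix (Fin 4) (Fin 4) ℤ := !![1,0,0,0; 1,-1,1,2; 0,0,1,0; 0,0,0,1]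
def A2 : Matrix (Fin 4) (Fin 4) ℤ := !![1,0,0,0; 0,1,0,0; 2,1,-1,1; 0,0,0,1]
def A3 : Matrix (Fin 4) (Fin 4) ℤ := !![1,0,0,0; 0,1,0,0; 0,0,1,0; 2,2,1,-1]

def Avec : Fin 4 → Matrix (Fin 4) (Fin 4) ℤ := ![A0, A1, A2, A3]
def Avec' : Fin 4 → Matrix (Fin 4) (Fin 4) ℤ := ![A0, A1, A2, A1]

lemma liftA : pathMatrix.IsLiftable Avec := by
  intro i j; fin_cases i <;> fin_cases j <;> decide

lemma liftA' : pathMatrix.IsLiftable Avec' := by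
  intro i j; fin_cases i <;> fin_cases j <;> decide

lemma orderOf_eq_zero_of_shear {G : Type*} [Group G] (f : G →* Matrix (Fin 4) (Fin 4) ℤ)
    (x : G) (u v : Fin 4 → ℤ) (c : ℤ) (hc : c ≠ 0) (j : Fin 4) (hj : u j ≠ 0)
    (hu : (f x).mulVec u = u) (hv : (f x).mulVec v = v + c • u) : orderOf x = 0 := by
  rw [orderOf_eq_zero_iff']
  intro n hn hxn
  have key : ∀ m : ℕ, ((f x) ^ m).mulVec v = v + ((m : ℤ) * c) • u := by
    intro m
    induction m with
    | zero => simp [Matrix.one_mulVec]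
    | succ k ih =>
      rw [pow_succ', ← Matrix.mulVec_mulVec, ih, Matrix.mulVec_add, hv, Matrix.mulVec_smul, hu]
      push_cast
      rw [add_mul, one_mul, add_smul]
      abel
  have h1 : ((f x) ^ n).mulVec v = v := by rw [← map_pow, hxn, map_one, Matrix.one_mulVec]
  rw [key n] at h1
  have h2 : (((n : ℤ) * c) • u) j = 0 := by
    have := (left_eq_add.mp h1.symm)
    rw [this]; rfl
  have h3 : ((n : ℤ) * c) * u j = 0 := h2
  rcases mul_eq_zero.mp h3 with h | h
  · rcases mul_eq_zero.mp h with h' | h'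
    · have : (n : ℤ) ≠ 0 := Int.natCast_ne_zero.mpr hn.ne'
      exact this h'
    · exact hc h'
  · exact hj h

end TwistAux

section helpers

variable {G : Type*} [Group G]

lemma conj_pow_eq_one {g x : G} {n : ℕ} (h : x ^ n = 1) : (g * x * g⁻¹) ^ n = 1 := by
  rw [conj_pow, h, mul_one, mul_inv_cancel]

lemma swap_pow_eq_one {x y : G} {n : ℕ} (h : (x * y) ^ n = 1) : (y * x) ^ n = 1 := by
  have e : y * x = y * (x * y) * y⁻¹ := by group
  rw [e, conj_pow, h, mul_one, mul_inv_cancel]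

variable {B : Type*} {W : Type*} [Group W] {M : CoxeterMatrix B} (cs : CoxeterSystem M W)

lemma sq2 {i j : B} (h : M.M i j = 3) :
    (cs.simple i * cs.simple j) ^ 2 = cs.simple j * cs.simple i := by
  have h3 : (cs.simple i * cs.simple j) ^ 3 = 1 := by
    have := cs.simple_mul_simple_pow i j
    rwa [show (M : Matrix B B ℕ) i j = M.M i j from rfl, h] at this
  have e : (cs.simple i * cs.simple j) ^ 3 * (cs.simple i * cs.simple j)⁻¹
      = (cs.simple i * cs.simple j) ^ 2 := by
    rw [pow_succ, mul_inv_cancel_right]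
  rw [← e, h3, one_mul, mul_inv_rev, cs.inv_simple, cs.inv_simple]

lemma comm1 {i j : B} (h : M.M i j = 3) :
    cs.simple i * (cs.simple i * cs.simple j * cs.simple i)
      = (cs.simple i * cs.simple j * cs.simple i) * cs.simple j := by
  have h2 := sq2 cs h
  have l : cs.simple i * (cs.simple i * cs.simple j * cs.simple i)
      = cs.simple j * cs.simple i := by simp [mul_assoc]
  have r : (cs.simple i * cs.simple j * cs.simple i) * cs.simple j
      = (cs.simple i * cs.simple j) ^ 2 := by
    rw [pow_two]; simp [mul_assoc]
  rw [l, r, h2]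

lemma comm2 {i j : B} (h : M.M i j = 3) :
    cs.simple j * (cs.simple i * cs.simple j * cs.simple i)
      = (cs.simple i * cs.simple j * cs.simple i) * cs.simple i := by
  have h2 : (cs.simple j * cs.simple i) ^ 2 = cs.simple i * cs.simple j :=
    sq2 cs ((M.symmetric j i).trans h)
  have l : cs.simple j * (cs.simple i * cs.simple j * cs.simple i)
      = (cs.simple j * cs.simple i) ^ 2 := by
    rw [pow_two]; simp [mul_assoc]
  rw [l, h2, cs.simple_mul_simple_cancel_right]

lemma wsq (i j : B) :
    (cs.simple i * cs.simple j * cs.simple i) * (cs.simple i * cs.simple j * cs.simple i) = 1 := by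
  simp [mul_assoc]

lemma winv (i j : B) :
    (cs.simple i * cs.simple j * cs.simple i)⁻¹ = cs.simple i * cs.simple j * cs.simple i := by
  simp [mul_inv_rev, mul_assoc]

end helpers

namespace TwistAux

variable {W : Type*} [Group W]

section build

variable (cs : CoxeterSystem pathMatrix W)

lemma path_pow {n : ℕ} (i j : Fin 4)
    (h : (pathMatrix : Matrix (Fin 4) (Fin 4) ℕ) i j = n) :
    (cs.simple i * cs.simple j) ^ n = 1 := h ▸ cs.simple_mul_simple_pow i j

/-- `w = s₂ s₃ s₂`. -/
def ww : W := cs.simple 1 * cs.simple 2 * cs.simple 1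

/-- The images of the star generators in `W`. -/
def vfun : Fin 4 → W :=
  ![cs.simple 0, cs.simple 1, cs.simple 2, ww cs * cs.simple 3 * (ww cs)⁻¹]

lemma hv13 : (cs.simple 1 * (ww cs * cs.simple 3 * (ww cs)⁻¹)) ^ 3 = 1 := by
  have hc1 : cs.simple 1 * ww cs = ww cs * cs.simple 2 := comm1 cs (by rfl)
  have e : cs.simple 1 * (ww cs * cs.simple 3 * (ww cs)⁻¹)
      = (cs.simple 1 * ww cs) * cs.simple 3 * (ww cs)⁻¹ := by group
  rw [e, hc1, show (ww cs * cs.simple 2) * cs.simple 3 * (ww cs)⁻¹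
      = ww cs * (cs.simple 2 * cs.simple 3) * (ww cs)⁻¹ from by group]
  exact conj_pow_eq_one (path_pow cs 2 3 rfl)

lemma hv : starMatrix.IsLiftable (vfun cs) := by
  intro i j
  fin_cases i <;> fin_cases j
  · show (cs.simple 0 * cs.simple 0) ^ 1 = 1
    rw [pow_one]; exact cs.simple_mul_simple_self 0
  · show (cs.simple 0 * cs.simple 1) ^ 3 = 1
    exact path_pow cs 0 1 rfl
  · exact pow_zero _
  · exact pow_zero _
  · show (cs.simple 1 * cs.simple 0) ^ 3 = 1
    exact path_pow cs 1 0 rfl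
  · show (cs.simple 1 * cs.simple 1) ^ 1 = 1
    rw [pow_one]; exact cs.simple_mul_simple_self 1
  · show (cs.simple 1 * cs.simple 2) ^ 3 = 1
    exact path_pow cs 1 2 rfl
  · show (cs.simple 1 * (ww cs * cs.simple 3 * (ww cs)⁻¹)) ^ 3 = 1
    exact hv13 cs
  · exact pow_zero _
  · show (cs.simple 2 * cs.simple 1) ^ 3 = 1
    exact path_pow cs 2 1 rfl
  · show (cs.simple 2 * cs.simple 2) ^ 1 = 1
    rw [pow_one]; exact cs.simple_mul_simple_self 2
  · exact pow_zero _
  · exact pow_zero _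
  · show ((ww cs * cs.simple 3 * (ww cs)⁻¹) * cs.simple 1) ^ 3 = 1
    exact swap_pow_eq_one (hv13 cs)
  · exact pow_zero _
  · show ((ww cs * cs.simple 3 * (ww cs)⁻¹) * (ww cs * cs.simple 3 * (ww cs)⁻¹)) ^ 1 = 1
    rw [pow_one, show (ww cs * cs.simple 3 * (ww cs)⁻¹) * (ww cs * cs.simple 3 * (ww cs)⁻¹)
        = ww cs * (cs.simple 3 * cs.simple 3) * (ww cs)⁻¹ from by group,
      cs.simple_mul_simple_self 3, mul_one, mul_inv_cancel]

/-- The canonical system on the star Coxeter group. -/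
def scs : CoxeterSystem starMatrix starMatrix.Group := starMatrix.toCoxeterSystem

lemma star_pow {n : ℕ} (i j : Fin 4)
    (h : (starMatrix : Matrix (Fin 4) (Fin 4) ℕ) i j = n) :
    (scs.simple i * scs.simple j) ^ n = 1 := h ▸ scs.simple_mul_simple_pow i j

/-- `w' = t₂ t₃ t₂` in the star group. -/
def ww' : starMatrix.Group := scs.simple 1 * scs.simple 2 * scs.simple 1

/-- The images of the path generators in the star group. -/
def ufun : Fin 4 → starMatrix.Group :=
  ![scs.simple 0, scs.simple 1, scs.simple 2, ww' * scs.simple 3 * ww'⁻¹]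

lemma hu23 : (scs.simple 2 * (ww' * scs.simple 3 * ww'⁻¹)) ^ 3 = 1 := by
  have hc2 : scs.simple 2 * ww' = ww' * scs.simple 1 := comm2 scs (by rfl)
  have e : scs.simple 2 * (ww' * scs.simple 3 * ww'⁻¹)
      = (scs.simple 2 * ww') * scs.simple 3 * ww'⁻¹ := by group
  rw [e, hc2, show (ww' * scs.simple 1) * scs.simple 3 * ww'⁻¹
      = ww' * (scs.simple 1 * scs.simple 3) * ww'⁻¹ from by group]
  exact conj_pow_eq_one (star_pow 1 3 rfl)

lemma hu : pathMatrix.IsLiftable ufun := by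
  intro i j
  fin_cases i <;> fin_cases j
  · show (scs.simple 0 * scs.simple 0) ^ 1 = 1
    rw [pow_one]; exact scs.simple_mul_simple_self 0
  · show (scs.simple 0 * scs.simple 1) ^ 3 = 1
    exact star_pow 0 1 rfl
  · exact pow_zero _
  · exact pow_zero _
  · show (scs.simple 1 * scs.simple 0) ^ 3 = 1
    exact star_pow 1 0 rfl
  · show (scs.simple 1 * scs.simple 1) ^ 1 = 1
    rw [pow_one]; exact scs.simple_mul_simple_self 1
  · show (scs.simple 1 * scs.simple 2) ^ 3 = 1
    exact star_pow 1 2 rfl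
  · exact pow_zero _
  · exact pow_zero _
  · show (scs.simple 2 * scs.simple 1) ^ 3 = 1
    exact star_pow 2 1 rfl
  · show (scs.simple 2 * scs.simple 2) ^ 1 = 1
    rw [pow_one]; exact scs.simple_mul_simple_self 2
  · show (scs.simple 2 * (ww' * scs.simple 3 * ww'⁻¹)) ^ 3 = 1
    exact hu23
  · exact pow_zero _
  · exact pow_zero _
  · show ((ww' * scs.simple 3 * ww'⁻¹) * scs.simple 2) ^ 3 = 1
    exact swap_pow_eq_one hu23
  · show ((ww' * scs.simple 3 * ww'⁻¹) * (ww' * scs.simple 3 * ww'⁻¹)) ^ 1 = 1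
    rw [pow_one, show (ww' * scs.simple 3 * ww'⁻¹) * (ww' * scs.simple 3 * ww'⁻¹)
        = ww' * (scs.simple 3 * scs.simple 3) * ww'⁻¹ from by group,
      scs.simple_mul_simple_self 3, mul_one, mul_inv_cancel]

/-- The lifted hom from the star group to `W`. -/
def φ : starMatrix.Group →* W := scs.lift ⟨vfun cs, hv cs⟩

/-- The lifted hom from `W` to the star group. -/
def ψ : W →* starMatrix.Group := cs.lift ⟨ufun, hu⟩

lemma phi_simple (i : Fin 4) : φ cs (scs.simple i) = vfun cs i :=
  scs.lift_apply_simple (hv cs) i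

lemma psi_simple (i : Fin 4) : ψ cs (cs.simple i) = ufun i :=
  cs.lift_apply_simple hu i

lemma phi_psi : (φ cs).comp (ψ cs) = MonoidHom.id W := by
  apply cs.ext_simple
  intro i
  rw [MonoidHom.comp_apply, MonoidHom.id_apply, psi_simple]
  fin_cases i
  · exact phi_simple cs 0
  · exact phi_simple cs 1
  · exact phi_simple cs 2
  · show φ cs (ww' * scs.simple 3 * ww'⁻¹) = cs.simple 3
    have e : φ cs (ww' * scs.simple 3 * ww'⁻¹)
        = φ cs (scs.simple 1) * φ cs (scs.simple 2) * φ cs (scs.simple 1) * φ cs (scs.simple 3)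
          * (φ cs (scs.simple 1) * φ cs (scs.simple 2) * φ cs (scs.simple 1))⁻¹ := by
      simp only [ww', map_mul, map_inv]
    rw [e]; simp only [phi_simple]
    show (ww cs) * (ww cs * cs.simple 3 * (ww cs)⁻¹) * (ww cs)⁻¹ = cs.simple 3
    rw [show (ww cs) * (ww cs * cs.simple 3 * (ww cs)⁻¹) * (ww cs)⁻¹
        = (ww cs * ww cs) * cs.simple 3 * (ww cs * ww cs)⁻¹ from by group,
      show ww cs * ww cs = 1 from wsq cs 1 2, one_mul, inv_one, mul_one]

lemma psi_phi : (ψ cs).comp (φ cs) = MonoidHom.id starMatrix.Group := by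
  apply scs.ext_simple
  intro i
  rw [MonoidHom.comp_apply, MonoidHom.id_apply, phi_simple]
  fin_cases i
  · exact psi_simple cs 0
  · exact psi_simple cs 1
  · exact psi_simple cs 2
  · show ψ cs (ww cs * cs.simple 3 * (ww cs)⁻¹) = scs.simple 3
    have e : ψ cs (ww cs * cs.simple 3 * (ww cs)⁻¹)
        = ψ cs (cs.simple 1) * ψ cs (cs.simple 2) * ψ cs (cs.simple 1) * ψ cs (cs.simple 3)
          * (ψ cs (cs.simple 1) * ψ cs (cs.simple 2) * ψ cs (cs.simple 1))⁻¹ := by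
      simp only [ww, map_mul, map_inv]
    rw [e]; simp only [psi_simple]
    show ww' * (ww' * scs.simple 3 * ww'⁻¹) * ww'⁻¹ = scs.simple 3
    rw [show ww' * (ww' * scs.simple 3 * ww'⁻¹) * ww'⁻¹
        = (ww' * ww') * scs.simple 3 * (ww' * ww')⁻¹ from by group,
      show ww' * ww' = 1 from wsq scs 1 2, one_mul, inv_one, mul_one]

/-- The star Coxeter system on `W`. -/
def cs' : CoxeterSystem starMatrix W :=
  ⟨MonoidHom.toMulEquiv (ψ cs) (φ cs) (phi_psi cs) (psi_phi cs)⟩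

lemma cs'_simple (i : Fin 4) : (cs' cs).simple i = vfun cs i := by
  show φ cs (PresentedGroup.of i) = vfun cs i
  exact phi_simple cs i

end build

end TwistAux

open TwistAux

/-- Let `W` be the Coxeter group on `S = {s₁, s₂, s₃, s₄}` with
`o(s₁s₂) = o(s₂s₃) = o(s₃s₄) = 3` and `o(s₁s₃) = o(s₁s₄) = o(s₂s₄) = ∞`.  With
`s₄' = s₂s₃s₂s₄s₂s₃s₂`, the set `S' = {s₁, s₂, s₃, s₄'}` is a Coxeter generating set of `W`
with `o(s₁s₂) = o(s₂s₃) = o(s₂s₄') = 3` and `o(s₁s₃) = o(s₁s₄') = o(s₃s₄') = ∞`; moreover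
`M(S')` is not isomorphic to `M(S)` (no order-preserving bijection `S ≃ S'` exists), so `W`
is a non-rigid Coxeter group. -/
theorem twist_example_non_rigid
    {W : Type*} [Group W] (cs : CoxeterSystem pathMatrix W)
    (s₁ s₂ s₃ s₄ s₄' : W)
    (h1 : s₁ = cs.simple 0) (h2 : s₂ = cs.simple 1) (h3 : s₃ = cs.simple 2)
    (h4 : s₄ = cs.simple 3) (h4' : s₄' = s₂ * s₃ * s₂ * s₄ * s₂ * s₃ * s₂) :
    IsCoxeterGenSet {s₁, s₂, s₃, s₄'} ∧
    orderOf (s₁ * s₂) = 3 ∧ orderOf (s₂ * s₃) = 3 ∧ orderOf (s₂ * s₄') = 3 ∧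
    orderOf (s₁ * s₃) = 0 ∧ orderOf (s₁ * s₄') = 0 ∧ orderOf (s₃ * s₄') = 0 ∧
    ¬ ∃ φ : ({s₁, s₂, s₃, s₄} : Set W) ≃ ({s₁, s₂, s₃, s₄'} : Set W),
        ∀ x y : ({s₁, s₂, s₃, s₄} : Set W),
          orderOf ((φ x : W) * (φ y : W)) = orderOf ((x : W) * (y : W)) := by
  subst h4' h1 h2 h3 h4
  -- abbreviation for s₄'
  set Q : W := cs.simple 1 * cs.simple 2 * cs.simple 1 * cs.simple 3 * cs.simple 1 *
    cs.simple 2 * cs.simple 1 with hQdef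
  -- the matrix representation
  let ρ : W →* Matrix (Fin 4) (Fin 4) ℤ := cs.lift ⟨Avec, liftA⟩
  let ρ' : W →* Matrix (Fin 4) (Fin 4) ℤ := cs.lift ⟨Avec', liftA'⟩
  have hρ : ∀ i, ρ (cs.simple i) = Avec i := fun i => cs.lift_apply_simple liftA i
  have hρ' : ∀ i, ρ' (cs.simple i) = Avec' i := fun i => cs.lift_apply_simple liftA' i
  have hρ0 : ρ (cs.simple 0) = A0 := hρ 0
  have hρ1 : ρ (cs.simple 1) = A1 := hρ 1
  have hρ2 : ρ (cs.simple 2) = A2 := hρ 2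
  have hρ3 : ρ (cs.simple 3) = A3 := hρ 3
  have hρQ : ρ Q = A1 * A2 * A1 * A3 * A1 * A2 * A1 := by
    rw [hQdef]
    simp only [map_mul, hρ0, hρ1, hρ2, hρ3]
  have hρ'0 : ρ' (cs.simple 0) = A0 := hρ' 0
  have hρ'Q : ρ' Q = A1 * A2 * A1 * A1 * A1 * A2 * A1 := by
    rw [hQdef]
    simp only [map_mul, hρ' 1, hρ' 2, hρ' 3]
    rfl
  -- Q in conjugated form
  have hQ' : Q = ww cs * cs.simple 3 * (ww cs)⁻¹ := by
    rw [hQdef]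
    show _ = (cs.simple 1 * cs.simple 2 * cs.simple 1) * cs.simple 3 *
      (cs.simple 1 * cs.simple 2 * cs.simple 1)⁻¹
    rw [winv cs 1 2]
    group
  -- distinctness of the simples
  have dist : ∀ i j : Fin 4, cs.simple i = cs.simple j → i = j := by
    intro i j h
    have h2 : Avec i = Avec j := by rw [← hρ i, ← hρ j, h]
    have hAinj : Function.Injective Avec := by decide
    exact hAinj h2
  -- order-3 facts
  have o12 : orderOf (cs.simple 0 * cs.simple 1) = 3 := by
    refine orderOf_eq_prime (path_pow cs 0 1 rfl) ?_
    intro h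
    have := congrArg ρ h
    rw [map_mul, hρ0, hρ1, map_one] at this
    exact absurd this (by decide)
  have o23 : orderOf (cs.simple 1 * cs.simple 2) = 3 := by
    refine orderOf_eq_prime (path_pow cs 1 2 rfl) ?_
    intro h
    have := congrArg ρ h
    rw [map_mul, hρ1, hρ2, map_one] at this
    exact absurd this (by decide)
  have o2Q : orderOf (cs.simple 1 * Q) = 3 := by
    refine orderOf_eq_prime ?_ ?_
    · rw [hQ']; exact hv13 cs
    · intro h
      have := congrArg ρ h
      rw [map_mul, hρ1, hρQ, map_one] at this
      exact absurd this (by decide)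
  -- infinite-order facts
  have o13 : orderOf (cs.simple 0 * cs.simple 2) = 0 := by
    refine orderOf_eq_zero_of_shear ρ _ ![1,0,1,0] ![1,0,0,0] 2 (by decide) 0 (by decide) ?_ ?_
    · rw [map_mul, hρ0, hρ2]; decide
    · rw [map_mul, hρ0, hρ2]; decide
  have o24 : orderOf (cs.simple 1 * cs.simple 3) = 0 := by
    refine orderOf_eq_zero_of_shear ρ _ ![0,1,0,1] ![0,1,0,0] 2 (by decide) 1 (by decide) ?_ ?_
    · rw [map_mul, hρ1, hρ3]; decide
    · rw [map_mul, hρ1, hρ3]; decide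
  have o1Q : orderOf (cs.simple 0 * Q) = 0 := by
    refine orderOf_eq_zero_of_shear ρ' _ ![1,0,1,0] ![1,0,0,0] 2 (by decide) 0 (by decide) ?_ ?_
    · rw [map_mul, hρ'0, hρ'Q]; decide
    · rw [map_mul, hρ'0, hρ'Q]; decide
  have o3Q : orderOf (cs.simple 2 * Q) = 0 := by
    refine orderOf_eq_zero_of_shear ρ _ ![0,3,2,1] ![0,0,-1,0] 2 (by decide) 1 (by decide) ?_ ?_
    · rw [map_mul, hρ2, hρQ]; decide
    · rw [map_mul, hρ2, hρQ]; decide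
  have oswap : ∀ a b : W, orderOf (b * a) = orderOf (a * b) := fun a b =>
    SemiconjBy.orderOf_eq a ((mul_assoc a b a).symm)
  -- the Coxeter generating set
  have hgen : IsCoxeterGenSet ({cs.simple 0, cs.simple 1, cs.simple 2, Q} : Set W) := by
    have hmem : ∀ i : Fin 4, vfun cs i ∈ ({cs.simple 0, cs.simple 1, cs.simple 2, Q} : Set W) := by
      intro i
      fin_cases i
      · exact Set.mem_insert _ _
      · exact Set.mem_insert_of_mem _ (Set.mem_insert _ _)
      · exact Set.mem_insert_of_mem _ (Set.mem_insert_of_mem _ (Set.mem_insert _ _))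
      · refine Set.mem_insert_of_mem _ (Set.mem_insert_of_mem _ (Set.mem_insert_of_mem _ ?_))
        show ww cs * cs.simple 3 * (ww cs)⁻¹ ∈ {Q}
        rw [← hQ']
        exact Set.mem_singleton _
    let v' : Fin 4 → ({cs.simple 0, cs.simple 1, cs.simple 2, Q} : Set W) :=
      fun i => ⟨vfun cs i, hmem i⟩
    have hg : ∀ i, ρ (vfun cs i) = ![A0, A1, A2, A1*A2*A1*A3*A1*A2*A1] i := by
      intro i
      fin_cases i
      · exact hρ0
      · exact hρ1
      · exact hρ2
      · show ρ (vfun cs 3) = A1*A2*A1*A3*A1*A2*A1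
        rw [show vfun cs 3 = ww cs * cs.simple 3 * (ww cs)⁻¹ from rfl, ← hQ']
        exact hρQ
    have hinj : Function.Injective v' := by
      intro i j h
      have h2 : ρ (vfun cs i) = ρ (vfun cs j) := congrArg ρ (congrArg Subtype.val h)
      rw [hg i, hg j] at h2
      have hBinj : Function.Injective ![A0, A1, A2, A1*A2*A1*A3*A1*A2*A1] := by decide
      exact hBinj h2
    have hsurj : Function.Surjective v' := by
      rintro ⟨x, hx⟩
      simp only [Set.mem_insert_iff, Set.mem_singleton_iff] at hx
      rcases hx with rfl | rfl | rfl | rfl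
      · exact ⟨0, rfl⟩
      · exact ⟨1, rfl⟩
      · exact ⟨2, rfl⟩
      · exact ⟨3, Subtype.ext hQ'.symm⟩
    let e := Equiv.ofBijective v' ⟨hinj, hsurj⟩
    refine ⟨starMatrix.reindex e, (cs' cs).reindex e, ?_⟩
    intro r
    rw [CoxeterSystem.reindex_simple, cs'_simple]
    exact congrArg Subtype.val (e.apply_symm_apply r)
  refine ⟨hgen, o12, o23, o2Q, o13, o1Q, o3Q, ?_⟩
  -- no order-preserving bijection
  rintro ⟨φ, hφ⟩
  have hqmem : cs.simple 1 ∈ ({cs.simple 0, cs.simple 1, cs.simple 2, Q} : Set W) :=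
    Set.mem_insert_of_mem _ (Set.mem_insert _ _)
  set q : ({cs.simple 0, cs.simple 1, cs.simple 2, Q} : Set W) := ⟨cs.simple 1, hqmem⟩ with hqdef
  set x := φ.symm q with hxdef
  have hx : φ x = q := φ.apply_symm_apply q
  have key : ∀ y : ({cs.simple 0, cs.simple 1, cs.simple 2, cs.simple 3} : Set W),
      y ≠ x → orderOf ((x : W) * (y : W)) = 3 := by
    intro y hy
    have h1 := hφ x y
    rw [hx] at h1
    have hφy := (φ y).2
    simp only [Set.mem_insert_iff, Set.mem_singleton_iff] at hφy
    rcases hφy with hc | hc | hc | hc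
    · rw [← h1, hqdef, hc]
      rw [oswap]
      exact o12
    · exfalso
      apply hy
      apply φ.injective
      rw [hx]
      exact Subtype.ext hc
    · rw [← h1, hqdef, hc]
      exact o23
    · rw [← h1, hqdef, hc]
      exact o2Q
  have hxmem := x.2
  simp only [Set.mem_insert_iff, Set.mem_singleton_iff] at hxmem
  rcases hxmem with hc | hc | hc | hc
  · -- x = s₁ : use y = s₃
    have hmem : cs.simple 2 ∈ ({cs.simple 0, cs.simple 1, cs.simple 2, cs.simple 3} : Set W) :=
      Set.mem_insert_of_mem _ (Set.mem_insert_of_mem _ (Set.mem_insert _ _))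
    have h3 := key ⟨cs.simple 2, hmem⟩ (by
      intro hyx
      have := congrArg Subtype.val hyx
      rw [hc] at this
      exact absurd (dist 2 0 this) (by decide))
    rw [hc] at h3
    rw [o13] at h3
    exact absurd h3 (by decide)
  · -- x = s₂ : use y = s₄
    have hmem : cs.simple 3 ∈ ({cs.simple 0, cs.simple 1, cs.simple 2, cs.simple 3} : Set W) :=
      Set.mem_insert_of_mem _ (Set.mem_insert_of_mem _ (Set.mem_insert_of_mem _ rfl))
    have h3 := key ⟨cs.simple 3, hmem⟩ (by
      intro hyx
      have := congrArg Subtype.val hyx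
      rw [hc] at this
      exact absurd (dist 3 1 this) (by decide))
    rw [hc] at h3
    rw [o24] at h3
    exact absurd h3 (by decide)
  · -- x = s₃ : use y = s₁
    have hmem : cs.simple 0 ∈ ({cs.simple 0, cs.simple 1, cs.simple 2, cs.simple 3} : Set W) :=
      Set.mem_insert _ _
    have h3 := key ⟨cs.simple 0, hmem⟩ (by
      intro hyx
      have := congrArg Subtype.val hyx
      rw [hc] at this
      exact absurd (dist 0 2 this) (by decide))
    rw [hc] at h3
    rw [oswap, o13] at h3
    exact absurd h3 (by decide)
  · -- x = s₄ : use y = s₂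
    have hmem : cs.simple 1 ∈ ({cs.simple 0, cs.simple 1, cs.simple 2, cs.simple 3} : Set W) :=
      Set.mem_insert_of_mem _ (Set.mem_insert _ _)
    have h3 := key ⟨cs.simple 1, hmem⟩ (by
      intro hyx
      have := congrArg Subtype.val hyx
      rw [hc] at this
      exact absurd (dist 1 3 this) (by decide))
    rw [hc] at h3
    rw [oswap, o24] at h3
    exact absurd h3 (by decide)
end

section
/- Let W be the Coxeter group on S = {s, t, t', c} with o(st) = o(st') = 3, o(ct) = o(ct') = 4, o(sc) = 2 and o(tt') = ∞. Define θ: S → W by θ(c) = c, θ(s) = sc, θ(t) = stcsts, θ(t') = st'cst's. Then θ extends uniquely to an involutory automorphism of W. -/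
/-!
The reflections `s, t, c` generate a quotient of the hyperoctahedral group `S₃ ⋉ (ℤ/2)³`: with
`s = (1 2)`, `t = (2 3)` and `c = ε₃` the sign change of the third coordinate, the other sign
changes are `ε₂ = tct` and `ε₁ = stcts`, and `θ(s) = s ε₃`, `θ(t) = t ε₁`, `θ(c) = ε₃`. Pushing
sign changes to the right of `s` and `t` rewrites a word in `s, t, c` to a normal form
(permutation)·(sorted product of sign changes), and comparing normal forms proves the Coxeter
relations of type `B₃` for `θ(s), θ(t), θ(c)` as well as `θ(θ(t)) = t`. The same holds for `t'`,
and `o(tt') = ∞` imposes no relation, so `θ` lifts to an endomorphism of `W`; it squares to the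
identity on `S`, hence is an involutive automorphism, and it is unique because `S` generates `W`.
-/

/-- The Coxeter matrix over `(s, t, t', c)` (indexed `0, 1, 2, 3`) with `o(st) = o(st') = 3`,
`o(ct) = o(ct') = 4`, `o(sc) = 2` and `o(tt') = ∞` (the entry `0` encodes `∞`). -/
def c3Matrix : CoxeterMatrix (Fin 4) where
  M := !![1, 3, 3, 2; 3, 1, 0, 4; 3, 0, 1, 4; 2, 4, 4, 1]
  isSymm := by ext i j; fin_cases i <;> fin_cases j <;> rfl
  diagonal := by intro i; fin_cases i <;> rfl
  off_diagonal := by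
    intro i j h; fin_cases i <;> fin_cases j <;> first | (exact absurd rfl h) | decide

section Involutions

variable {G : Type*} [Group G] {a b : G}

theorem mul_pow_two_eq_one_iff (ha : a * a = 1) (hb : b * b = 1) :
    (a * b) ^ 2 = 1 ↔ a * b = b * a := by
  rw [sq, mul_eq_one_iff_eq_inv]
  simp only [mul_inv_rev, inv_eq_of_mul_eq_one_right ha, inv_eq_of_mul_eq_one_right hb]

theorem mul_pow_three_eq_one_iff (ha : a * a = 1) (hb : b * b = 1) :
    (a * b) ^ 3 = 1 ↔ a * b * a = b * a * b := by
  have hpow : (a * b) ^ 3 = a * b * a * (b * a * b) := by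
    simp only [pow_succ, pow_zero, one_mul, mul_assoc]
  rw [hpow, mul_eq_one_iff_eq_inv]
  simp only [mul_inv_rev, inv_eq_of_mul_eq_one_right ha, inv_eq_of_mul_eq_one_right hb, mul_assoc]

theorem mul_pow_four_eq_one_iff (ha : a * a = 1) (hb : b * b = 1) :
    (a * b) ^ 4 = 1 ↔ a * b * a * b = b * a * b * a := by
  have hpow : (a * b) ^ 4 = a * b * a * b * (a * b * a * b) := by
    simp only [pow_succ, pow_zero, one_mul, mul_assoc]
  rw [hpow, mul_eq_one_iff_eq_inv]
  simp only [mul_inv_rev, inv_eq_of_mul_eq_one_right ha, inv_eq_of_mul_eq_one_right hb, mul_assoc]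

end Involutions

structure IsB3Triple {G : Type*} [Group G] (s t c : G) : Prop where
  s_mul_self : s * s = 1
  t_mul_self : t * t = 1
  c_mul_self : c * c = 1
  braid_st : s * t * s = t * s * t
  commute_sc : s * c = c * s
  braid_tc : t * c * t * c = c * t * c * t

section SignChanges

variable {G : Type*} [Group G]

def signChange₂ (t c : G) : G := t * c * t

def signChange₁ (s t c : G) : G := s * signChange₂ t c * s

end SignChanges

namespace IsB3Triple

variable {G : Type*} [Group G] {s t c : G}

theorem s_mul_s_mul (h : IsB3Triple s t c) (x : G) : s * (s * x) = x := by
  rw [← mul_assoc, h.s_mul_self, one_mul]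

theorem t_mul_t_mul (h : IsB3Triple s t c) (x : G) : t * (t * x) = x := by
  rw [← mul_assoc, h.t_mul_self, one_mul]

theorem c_mul_c_mul (h : IsB3Triple s t c) (x : G) : c * (c * x) = x := by
  rw [← mul_assoc, h.c_mul_self, one_mul]

theorem t_s_t_mul (h : IsB3Triple s t c) (x : G) : t * (s * (t * x)) = s * (t * (s * x)) := by
  simp only [← mul_assoc, h.braid_st]

theorem c_s_mul (h : IsB3Triple s t c) (x : G) : c * (s * x) = s * (c * x) := by
  simp only [← mul_assoc, h.commute_sc]

theorem c_t_mul (h : IsB3Triple s t c) (x : G) : c * (t * x) = t * (signChange₂ t c * x) := by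
  simp only [signChange₂, mul_assoc, h.t_mul_t_mul]

theorem signChange₂_s_mul (h : IsB3Triple s t c) (x : G) :
    signChange₂ t c * (s * x) = s * (signChange₁ s t c * x) := by
  simp only [signChange₁, mul_assoc, h.s_mul_s_mul]

theorem signChange₂_t_mul (h : IsB3Triple s t c) (x : G) :
    signChange₂ t c * (t * x) = t * (c * x) := by
  simp only [signChange₂, mul_assoc, h.t_mul_t_mul]

theorem signChange₁_s_mul (h : IsB3Triple s t c) (x : G) :
    signChange₁ s t c * (s * x) = s * (signChange₂ t c * x) := by
  simp only [signChange₁, mul_assoc, h.s_mul_s_mul]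

theorem signChange₁_t_mul (h : IsB3Triple s t c) (x : G) :
    signChange₁ s t c * (t * x) = t * (signChange₁ s t c * x) := by
  simp only [signChange₁, signChange₂, mul_assoc]
  rw [h.t_s_t_mul, h.c_s_mul, ← h.t_s_t_mul]

theorem c_signChange₂_mul (h : IsB3Triple s t c) (x : G) :
    c * (signChange₂ t c * x) = signChange₂ t c * (c * x) := by
  simp only [signChange₂, ← mul_assoc, h.braid_tc]

theorem c_signChange₁_mul (h : IsB3Triple s t c) (x : G) :
    c * (signChange₁ s t c * x) = signChange₁ s t c * (c * x) := by
  simp only [signChange₁, mul_assoc]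
  rw [h.c_s_mul, h.c_signChange₂_mul, h.c_s_mul]

theorem signChange₂_signChange₁_mul (h : IsB3Triple s t c) (x : G) :
    signChange₂ t c * (signChange₁ s t c * x) = signChange₁ s t c * (signChange₂ t c * x) := by
  conv_lhs => simp only [signChange₂, mul_assoc]
  rw [← h.signChange₁_t_mul, h.c_signChange₁_mul, ← h.signChange₁_t_mul]
  simp only [signChange₂, mul_assoc]

theorem signChange₂_mul_signChange₂_mul (h : IsB3Triple s t c) (x : G) :
    signChange₂ t c * (signChange₂ t c * x) = x := by
  simp only [signChange₂, mul_assoc, h.t_mul_t_mul, h.c_mul_c_mul]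

theorem signChange₁_mul_signChange₁_mul (h : IsB3Triple s t c) (x : G) :
    signChange₁ s t c * (signChange₁ s t c * x) = x := by
  simp only [signChange₁, mul_assoc, h.s_mul_s_mul, h.signChange₂_mul_signChange₂_mul]

theorem transvection (h : IsB3Triple s t c) : IsB3Triple (s * c) (s * t * c * s * t * s) c := by
  refine ⟨?_, ?_, ?_, ?_, ?_, ?_⟩ <;> refine mul_right_cancel (b := 1) ?_ <;>
    simp only [mul_assoc, one_mul, h.s_mul_s_mul, h.t_mul_t_mul, h.c_mul_c_mul, h.t_s_t_mul,
      h.c_s_mul, h.c_t_mul, h.signChange₂_s_mul, h.signChange₂_t_mul, h.signChange₁_s_mul,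
      h.signChange₁_t_mul, h.c_signChange₂_mul, h.c_signChange₁_mul, h.signChange₂_signChange₁_mul,
      h.signChange₂_mul_signChange₂_mul]

theorem transvection_transvection (h : IsB3Triple s t c) :
    s * c * (s * t * c * s * t * s) * c * (s * c) * (s * t * c * s * t * s) * (s * c) = t := by
  refine mul_right_cancel (b := 1) ?_
  simp only [mul_assoc, h.s_mul_s_mul, h.c_mul_c_mul, h.t_s_t_mul, h.c_s_mul, h.c_t_mul,
    h.signChange₂_s_mul, h.signChange₂_t_mul, h.signChange₁_s_mul, h.signChange₁_t_mul,
    h.c_signChange₂_mul, h.signChange₂_signChange₁_mul, h.signChange₂_mul_signChange₂_mul,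
    h.signChange₁_mul_signChange₁_mul]

end IsB3Triple

theorem IsB3Triple.c3Matrix_isLiftable {G : Type*} [Group G] {s t t' c : G} (h : IsB3Triple s t c)
    (h' : IsB3Triple s t' c) : c3Matrix.IsLiftable ![s, t, t', c] := by
  intro i j
  fin_cases i <;> fin_cases j <;>
    simp [c3Matrix, mul_pow_two_eq_one_iff, mul_pow_three_eq_one_iff, mul_pow_four_eq_one_iff,
      h.s_mul_self, h.t_mul_self, h'.t_mul_self, h.c_mul_self, h.braid_st, h'.braid_st,
      h.commute_sc, h.braid_tc, h'.braid_tc]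

theorem CoxeterSystem.isB3Triple_simple {B W : Type*} [Group W] {M : CoxeterMatrix B}
    (cs : CoxeterSystem M W) {i j k : B} (hij : M i j = 3) (hjk : M j k = 4) (hik : M i k = 2) :
    IsB3Triple (cs.simple i) (cs.simple j) (cs.simple k) where
  s_mul_self := cs.simple_mul_simple_self i
  t_mul_self := cs.simple_mul_simple_self j
  c_mul_self := cs.simple_mul_simple_self k
  braid_st := (mul_pow_three_eq_one_iff (cs.simple_mul_simple_self i)
    (cs.simple_mul_simple_self j)).1 (hij ▸ cs.simple_mul_simple_pow i j)
  commute_sc := (mul_pow_two_eq_one_iff (cs.simple_mul_simple_self i)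
    (cs.simple_mul_simple_self k)).1 (hik ▸ cs.simple_mul_simple_pow i k)
  braid_tc := (mul_pow_four_eq_one_iff (cs.simple_mul_simple_self j)
    (cs.simple_mul_simple_self k)).1 (hjk ▸ cs.simple_mul_simple_pow j k)

section Transvection

variable {W : Type*} [Group W]

def IsC3Transvection (cs : CoxeterSystem c3Matrix W) (φ : W →* W) : Prop :=
  φ (cs.simple 3) = cs.simple 3 ∧ φ (cs.simple 0) = cs.simple 0 * cs.simple 3 ∧
    φ (cs.simple 1) = cs.simple 0 * cs.simple 1 * cs.simple 3 * cs.simple 0 * cs.simple 1 *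
      cs.simple 0 ∧
    φ (cs.simple 2) = cs.simple 0 * cs.simple 2 * cs.simple 3 * cs.simple 0 * cs.simple 2 *
      cs.simple 0

theorem exists_isC3Transvection (cs : CoxeterSystem c3Matrix W) :
    ∃ θ : W →* W, IsC3Transvection cs θ := by
  have h := cs.isB3Triple_simple (i := 0) (j := 1) (k := 3) rfl rfl rfl
  have h' := cs.isB3Triple_simple (i := 0) (j := 2) (k := 3) rfl rfl rfl
  exact ⟨cs.lift ⟨_, h.transvection.c3Matrix_isLiftable h'.transvection⟩,
    by simp [IsC3Transvection, cs.lift_apply_simple]⟩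

namespace IsC3Transvection

variable {cs : CoxeterSystem c3Matrix W} {φ ψ : W →* W}

theorem comp_self (hφ : IsC3Transvection cs φ) : φ.comp φ = MonoidHom.id W := by
  obtain ⟨h3, h0, h1, h2⟩ := hφ
  refine cs.ext_simple fun i => ?_
  simp only [MonoidHom.comp_apply, MonoidHom.id_apply]
  fin_cases i
  · show φ (φ (cs.simple 0)) = cs.simple 0
    rw [h0, map_mul, h0, h3, mul_assoc, cs.simple_mul_simple_self, mul_one]
  · show φ (φ (cs.simple 1)) = cs.simple 1
    simp only [h1, map_mul, h0, h3]
    exact (cs.isB3Triple_simple (i := 0) (j := 1) (k := 3) rfl rfl rfl).transvection_transvection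
  · show φ (φ (cs.simple 2)) = cs.simple 2
    simp only [h2, map_mul, h0, h3]
    exact (cs.isB3Triple_simple (i := 0) (j := 2) (k := 3) rfl rfl rfl).transvection_transvection
  · show φ (φ (cs.simple 3)) = cs.simple 3
    rw [h3, h3]

theorem ext (hφ : IsC3Transvection cs φ) (hψ : IsC3Transvection cs ψ) : φ = ψ := by
  obtain ⟨hφ3, hφ0, hφ1, hφ2⟩ := hφ
  obtain ⟨hψ3, hψ0, hψ1, hψ2⟩ := hψ
  refine cs.ext_simple fun i => ?_
  fin_cases i
  exacts [hφ0.trans hψ0.symm, hφ1.trans hψ1.symm, hφ2.trans hψ2.symm, hφ3.trans hψ3.symm]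

end IsC3Transvection

end Transvection

/-- Let `W` be the Coxeter group on `S = {s, t, t', c}` with `o(st) = o(st') = 3`,
`o(ct) = o(ct') = 4`, `o(sc) = 2`, `o(tt') = ∞`.  The map `θ` with `θ(c) = c`, `θ(s) = sc`,
`θ(t) = stcsts`, `θ(t') = st'cst's` extends uniquely to an automorphism of `W`, and this
automorphism is involutory (a `C₃`-transvection). -/
theorem c3_transvection_extends_uniquely
    {W : Type*} [Group W] (cs : CoxeterSystem c3Matrix W)
    (s t t' c : W)
    (hs : s = cs.simple 0) (ht : t = cs.simple 1) (ht' : t' = cs.simple 2)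
    (hc : c = cs.simple 3) :
    (∃! φ : W ≃* W,
      φ c = c ∧ φ s = s * c ∧
      φ t = s * t * c * s * t * s ∧ φ t' = s * t' * c * s * t' * s) ∧
    (∀ φ : W ≃* W,
      (φ c = c ∧ φ s = s * c ∧
        φ t = s * t * c * s * t * s ∧ φ t' = s * t' * c * s * t' * s) →
      ∀ w : W, φ (φ w) = w) := by
  subst hs ht ht' hc
  obtain ⟨θ, hθ⟩ := exists_isC3Transvection cs
  refine ⟨⟨θ.toMulEquiv θ hθ.comp_self hθ.comp_self, hθ, fun ψ hψ => ?_⟩, fun ψ hψ w => ?_⟩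
  · exact MulEquiv.ext fun w =>
      DFunLike.congr_fun (IsC3Transvection.ext (φ := ψ.toMonoidHom) hψ hθ) w
  · exact DFunLike.congr_fun (IsC3Transvection.comp_self (φ := ψ.toMonoidHom) hψ) w
end
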